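/- arXiv:1208.0161 — 5 statements merged into one kernel-verified Lean document; each statement's English description precedes it below -/
import Mathlib

section
/- Let f : {±1}^n → ℝ be a polynomial of degree at most d. Then for any q ≥ 2, ‖f‖_q ≤ (q−1)^{d/2} ‖f‖_2, where the norms are the normalized ℓ_p norms on the boolean cube. -/
noncomputable section

/-- The character `χ_S(x) = ∏_{i ∈ S} x_i` on the boolean cube, with `true ↦ -1`, `false ↦ 1`. -/
def cubeChar {n : ℕ} (S : Finset (Fin n)) (x : Fin n → Bool) : ℝ :=
  ∏ i ∈ S, (if x i then -1 else 1)

/-- The Fourier coefficient `f̂(S)` of `f : {±1}ⁿ → ℝ`. -/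
def cubeFourier {n : ℕ} (f : (Fin n → Bool) → ℝ) (S : Finset (Fin n)) : ℝ :=
  (2 ^ n : ℝ)⁻¹ * ∑ x : Fin n → Bool, f x * cubeChar S x

/-- The normalised ℓ_p norm `‖f‖_p = (2^{-n} ∑_x |f(x)|^p)^{1/p}` on the boolean cube. -/
def cubeNorm {n : ℕ} (p : ℝ) (f : (Fin n → Bool) → ℝ) : ℝ :=
  ((2 ^ n : ℝ)⁻¹ * ∑ x : Fin n → Bool, |f x| ^ p) ^ (1 / p)

/-!
For `1 ≤ p ≤ 2`, the `(p, 2)`-hypercontractive inequality `∑_S (p-1)^|S| ĝ(S)² ≤ ‖g‖_p²` is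
proved by induction on `n`. Writing `g(x₀, y) = E g(y) + x₀ D g(y)`, the inductive step reduces,
through Minkowski's inequality in `ℓ^(2/p)`, to the two-point inequality
`(a² + (p-1) b²)^(p/2) ≤ (|a+b|^p + |a-b|^p) / 2`, which is elementary calculus.

The bound for `q ≥ 2` follows by duality. Let `p = q/(q-1)` and `g = |f|^(q-2) f`, so that
`∑_S f̂(S) ĝ(S) = ‖f‖_q^q` and `‖g‖_p² = ‖f‖_q^(2q-2)`. Cauchy–Schwarz with the weights
`(q-1)^|S|` and `(p-1)^|S| = (q-1)^(-|S|)` gives `‖f‖_q^(2q) ≤ (q-1)^d ‖f‖_2² ‖f‖_q^(2q-2)`.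
-/

open Finset Real

def cubeMean {n : ℕ} (F : (Fin n → Bool) → ℝ) : ℝ :=
  (2 ^ n : ℝ)⁻¹ * ∑ x, F x

theorem cubeMean_nonneg {n : ℕ} {F : (Fin n → Bool) → ℝ} (hF : ∀ x, 0 ≤ F x) :
    0 ≤ cubeMean F :=
  mul_nonneg (by positivity) (sum_nonneg fun x _ ↦ hF x)

theorem cubeNorm_eq_cubeMean_rpow {n : ℕ} (p : ℝ) (f : (Fin n → Bool) → ℝ) :
    cubeNorm p f = cubeMean (fun x ↦ |f x| ^ p) ^ (1 / p) :=
  rfl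

theorem cubeNorm_nonneg {n : ℕ} (p : ℝ) (f : (Fin n → Bool) → ℝ) : 0 ≤ cubeNorm p f :=
  rpow_nonneg (cubeMean_nonneg fun x ↦ by positivity) _

theorem cubeNorm_sq {n : ℕ} (p : ℝ) (f : (Fin n → Bool) → ℝ) :
    cubeNorm p f ^ 2 = cubeMean (fun x ↦ |f x| ^ p) ^ (2 / p) := by
  rw [cubeNorm_eq_cubeMean_rpow, ← rpow_two, ← rpow_mul (cubeMean_nonneg fun x ↦ by positivity)]
  ring_nf

section Fourier

variable {n : ℕ}

theorem sum_cubeChar_mul_cubeChar (x y : Fin n → Bool) :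
    ∑ S : Finset (Fin n), cubeChar S x * cubeChar S y = if x = y then 2 ^ n else 0 := by
  have hcoord (a b : Bool) :
      (1 + (if a then -1 else 1) * (if b then -1 else 1) : ℝ) = if a = b then 2 else 0 := by
    cases a <;> cases b <;> norm_num
  simp_rw [cubeChar, ← prod_mul_distrib, ← powerset_univ, ← prod_one_add, hcoord,
    Fintype.prod_ite_zero, prod_const, card_univ, Fintype.card_fin, funext_iff]

theorem sum_cubeFourier_mul_cubeChar (f : (Fin n → Bool) → ℝ) (x : Fin n → Bool) :
    ∑ S, cubeFourier f S * cubeChar S x = f x := by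
  calc ∑ S, cubeFourier f S * cubeChar S x
      = (2 ^ n : ℝ)⁻¹ * ∑ y, f y * ∑ S, cubeChar S y * cubeChar S x := by
        simp_rw [cubeFourier, mul_sum, sum_mul, mul_assoc]
        exact sum_comm
    _ = f x := by simp [sum_cubeChar_mul_cubeChar, mul_comm]

theorem sum_cubeFourier_mul_cubeFourier (f g : (Fin n → Bool) → ℝ) :
    ∑ S, cubeFourier f S * cubeFourier g S = cubeMean fun x => f x * g x := by
  calc ∑ S, cubeFourier f S * cubeFourier g S
      = (2 ^ n : ℝ)⁻¹ * ∑ x, g x * ∑ S, cubeFourier f S * cubeChar S x := by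
        conv_lhs => enter [2, S, 2]; rw [cubeFourier]
        simp only [mul_sum]
        rw [sum_comm]
        exact sum_congr rfl fun x _ ↦ sum_congr rfl fun S _ ↦ by ring
    _ = cubeMean fun x => f x * g x := by simp_rw [sum_cubeFourier_mul_cubeChar, mul_comm, cubeMean]

theorem sum_sq_cubeFourier (f : (Fin n → Bool) → ℝ) :
    ∑ S, cubeFourier f S ^ 2 = cubeNorm 2 f ^ 2 := by
  rw [cubeNorm_sq, div_self two_ne_zero, rpow_one]
  simp only [sq, sum_cubeFourier_mul_cubeFourier, rpow_two, abs_mul_abs_self]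

theorem sum_pow_card_mul_sq_cubeFourier_le_of_degree_le {d : ℕ} {ρ : ℝ} (hρ : 1 ≤ ρ)
    (f : (Fin n → Bool) → ℝ) (hdeg : ∀ S : Finset (Fin n), d < #S → cubeFourier f S = 0) :
    ∑ S, ρ ^ #S * cubeFourier f S ^ 2 ≤ ρ ^ d * cubeNorm 2 f ^ 2 := by
  rw [← sum_sq_cubeFourier, mul_sum]
  refine sum_le_sum fun S _ ↦ ?_
  rcases le_or_gt #S d with h | h
  · exact mul_le_mul_of_nonneg_right (pow_le_pow_right₀ hρ h) (sq_nonneg _)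
  · simp [hdeg S h]

end Fourier

theorem two_mul_mul_le_one_add_rpow_sub_one_sub_rpow {r t : ℝ} (hr0 : 0 ≤ r) (hr1 : r ≤ 1)
    (ht0 : 0 ≤ t) (ht1 : t ≤ 1) : 2 * r * t ≤ (1 + t) ^ r - (1 - t) ^ r := by
  let F : ℝ → ℝ := fun s ↦ (1 + s) ^ r - (1 - s) ^ r - 2 * r * s
  let F' : ℝ → ℝ := fun s ↦ r * (1 + s) ^ (r - 1) + r * (1 - s) ^ (r - 1) - 2 * r
  have hF : ∀ s ∈ Set.Ioo (0 : ℝ) 1, HasDerivAt F (F' s) s := by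
    rintro s ⟨hs0, hs1⟩
    have hplus := ((hasDerivAt_id s).const_add 1).rpow_const (p := r) (Or.inl (by simp; linarith))
    have hminus := ((hasDerivAt_id s).const_sub 1).rpow_const (p := r) (Or.inl (by simp; linarith))
    refine ((hplus.sub hminus).sub ((hasDerivAt_id s).const_mul (2 * r))).congr_deriv ?_
    simp only [F', id]
    ring
  have hF' : ∀ s ∈ Set.Ioo (0 : ℝ) 1, 0 ≤ F' s := by
    rintro s ⟨hs0, hs1⟩
    have hX : 0 < (1 + s) ^ (r - 1) := by positivity
    have hY : 0 < (1 - s) ^ (r - 1) := rpow_pos_of_pos (by linarith) _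
    -- AM-GM, with `(1 + s)^(r-1) (1 - s)^(r-1) = (1 - s^2)^(r-1) ≥ 1`
    have hXY : 1 ≤ (1 + s) ^ (r - 1) * (1 - s) ^ (r - 1) := by
      rw [← mul_rpow (by linarith) (by linarith)]
      exact one_le_rpow_of_pos_of_le_one_of_nonpos (by nlinarith) (by nlinarith) (by linarith)
    nlinarith [sq_nonneg ((1 + s) ^ (r - 1) - (1 - s) ^ (r - 1))]
  have hmono : MonotoneOn F (Set.Icc 0 1) := by
    refine monotoneOn_of_hasDerivWithinAt_nonneg (f' := F') (convex_Icc 0 1) ?_ ?_ ?_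
    · fun_prop (disch := assumption)
    · simpa using fun s hs ↦ (hF s hs).hasDerivWithinAt
    · simpa using hF'
  have h := hmono ⟨le_rfl, zero_le_one⟩ ⟨ht0, ht1⟩ ht0
  simp only [F, add_zero, sub_zero, sub_self, one_rpow, mul_zero, sub_nonneg] at h
  linarith

theorem two_add_mul_sq_le_one_add_rpow_add_one_sub_rpow {p t : ℝ} (hp1 : 1 ≤ p) (hp2 : p ≤ 2)
    (ht0 : 0 ≤ t) (ht1 : t ≤ 1) : 2 + p * (p - 1) * t ^ 2 ≤ (1 + t) ^ p + (1 - t) ^ p := by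
  let F : ℝ → ℝ := fun s ↦ (1 + s) ^ p + (1 - s) ^ p - p * (p - 1) * s ^ 2
  let F' : ℝ → ℝ := fun s ↦ p * ((1 + s) ^ (p - 1) - (1 - s) ^ (p - 1) - 2 * (p - 1) * s)
  have hF : ∀ s ∈ Set.Ioo (0 : ℝ) 1, HasDerivAt F (F' s) s := by
    rintro s ⟨hs0, hs1⟩
    have hplus := ((hasDerivAt_id s).const_add 1).rpow_const (p := p) (Or.inr hp1)
    have hminus := ((hasDerivAt_id s).const_sub 1).rpow_const (p := p) (Or.inr hp1)
    refine ((hplus.add hminus).sub ((hasDerivAt_pow 2 s).const_mul (p * (p - 1)))).congr_deriv ?_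
    simp only [F', id]
    ring
  have hF' : ∀ s ∈ Set.Ioo (0 : ℝ) 1, 0 ≤ F' s := fun s hs ↦
    mul_nonneg (by linarith) (sub_nonneg.2 <| two_mul_mul_le_one_add_rpow_sub_one_sub_rpow
      (by linarith) (by linarith) hs.1.le hs.2.le)
  have hmono : MonotoneOn F (Set.Icc 0 1) := by
    refine monotoneOn_of_hasDerivWithinAt_nonneg (f' := F') (convex_Icc 0 1) ?_ ?_ ?_
    · fun_prop (disch := linarith)
    · simpa using fun s hs ↦ (hF s hs).hasDerivWithinAt
    · simpa using hF'
  have h := hmono ⟨le_rfl, zero_le_one⟩ ⟨ht0, ht1⟩ ht0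
  simp only [F, add_zero, sub_zero, one_rpow, ne_eq, OfNat.ofNat_ne_zero, not_false_eq_true,
    zero_pow, mul_zero] at h
  linarith

theorem one_add_mul_sq_rpow_le_abs_rpow_add_abs_rpow_div_two {p t : ℝ} (hp1 : 1 ≤ p)
    (hp2 : p ≤ 2) (ht : |t| ≤ 1) :
    (1 + (p - 1) * t ^ 2) ^ (p / 2) ≤ (|1 + t| ^ p + |1 - t| ^ p) / 2 := by
  have bernoulli : (1 + (p - 1) * |t| ^ 2) ^ (p / 2) ≤ 1 + p / 2 * ((p - 1) * |t| ^ 2) :=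
    rpow_one_add_le_one_add_mul_self (by nlinarith) (by linarith) (by linarith)
  have key := two_add_mul_sq_le_one_add_rpow_add_one_sub_rpow hp1 hp2 (abs_nonneg t) ht
  rw [sq_abs] at bernoulli key
  obtain ⟨ht_ge, ht_le⟩ := abs_le.1 ht
  rw [abs_of_nonneg (by linarith : 0 ≤ 1 + t), abs_of_nonneg (by linarith : 0 ≤ 1 - t)]
  rcases abs_choice t with h | h
  · rw [h] at key
    linarith
  · rw [h, ← sub_eq_add_neg, sub_neg_eq_add] at key
    linarith

theorem two_point_inequality {p : ℝ} (hp1 : 1 ≤ p) (hp2 : p ≤ 2) (a b : ℝ) :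
    (a ^ 2 + (p - 1) * b ^ 2) ^ (p / 2) ≤ (|a + b| ^ p + |a - b| ^ p) / 2 := by
  wlog hba : |b| ≤ |a| generalizing a b
  · have hab : a ^ 2 ≤ b ^ 2 := sq_le_sq.2 (le_of_not_ge hba)
    calc (a ^ 2 + (p - 1) * b ^ 2) ^ (p / 2) ≤ (b ^ 2 + (p - 1) * a ^ 2) ^ (p / 2) :=
          rpow_le_rpow (by nlinarith) (by nlinarith) (by linarith)
      _ ≤ (|a + b| ^ p + |a - b| ^ p) / 2 := by
          simpa [add_comm, abs_sub_comm] using this b a (le_of_not_ge hba)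
  rcases eq_or_ne a 0 with rfl | ha
  · obtain rfl : b = 0 := abs_nonpos_iff.1 (by simpa using hba)
    simp [zero_rpow (by linarith : p / 2 ≠ 0), zero_rpow (by linarith : p ≠ 0)]
  have ht : |b / a| ≤ 1 := by rw [abs_div]; exact div_le_one_of_le₀ hba (abs_nonneg a)
  -- Homogeneity: with `t = b / a`, both sides are `|a| ^ p` times those of the case `a = 1`.
  have hsq : a ^ 2 + (p - 1) * b ^ 2 = |a| ^ 2 * (1 + (p - 1) * (b / a) ^ 2) := by
    field_simp; rw [sq_abs]; ring
  have hplus : |a + b| = |a| * |1 + b / a| := by rw [← abs_mul]; congr 1; field_simp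
  have hminus : |a - b| = |a| * |1 - b / a| := by rw [← abs_mul]; congr 1; field_simp
  rw [hsq, hplus, hminus, mul_rpow (by positivity) (by nlinarith [sq_nonneg (b / a)]),
    ← rpow_natCast, ← rpow_mul (abs_nonneg a), mul_rpow (abs_nonneg a) (abs_nonneg _),
    mul_rpow (abs_nonneg a) (abs_nonneg _)]
  calc |a| ^ ((2 : ℕ) * (p / 2)) * (1 + (p - 1) * (b / a) ^ 2) ^ (p / 2)
      ≤ |a| ^ p * ((|1 + b / a| ^ p + |1 - b / a| ^ p) / 2) := by
        rw [show ((2 : ℕ) : ℝ) * (p / 2) = p by push_cast; ring]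
        exact mul_le_mul_of_nonneg_left
          (one_add_mul_sq_rpow_le_abs_rpow_add_abs_rpow_div_two hp1 hp2 ht) (by positivity)
    _ = _ := by ring

theorem Lp_norm_pair_sum_le_sum {ι : Type*} (s : Finset ι) {u v : ι → ℝ}
    (hu : ∀ i ∈ s, 0 ≤ u i) (hv : ∀ i ∈ s, 0 ≤ v i) {r : ℝ} (hr : 1 ≤ r) :
    ((∑ i ∈ s, u i) ^ r + (∑ i ∈ s, v i) ^ r) ^ (1 / r) ≤
      ∑ i ∈ s, (u i ^ r + v i ^ r) ^ (1 / r) := by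
  classical
  induction s using Finset.induction_on with
  | empty => simp [zero_rpow (by linarith : r ≠ 0), zero_rpow (inv_ne_zero (by linarith : r ≠ 0))]
  | insert a s ha ih =>
    rw [forall_mem_insert] at hu hv
    have hU := sum_nonneg hu.2
    have hV := sum_nonneg hv.2
    have minkowski := Lp_add_le_of_nonneg (univ : Finset (Fin 2)) (f := ![u a, v a])
      (g := ![∑ i ∈ s, u i, ∑ i ∈ s, v i]) hr (by simp [Fin.forall_fin_two, hu.1, hv.1])
      (by simp [Fin.forall_fin_two, hU, hV])
    simp only [Fin.sum_univ_two, Matrix.cons_val_zero, Matrix.cons_val_one] at minkowski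
    rw [sum_insert ha, sum_insert ha, sum_insert ha]
    exact minkowski.trans (add_le_add_right (ih hu.2 hv.2) _)

theorem abs_rpow_rpow_two_div {p : ℝ} (hp : p ≠ 0) (x : ℝ) : (|x| ^ p) ^ (2 / p) = x ^ 2 := by
  rw [← rpow_mul (abs_nonneg x), mul_div_cancel₀ _ hp, rpow_two, sq_abs]

section Tensorization

variable {n : ℕ}

theorem cubeMean_succ (F : (Fin (n + 1) → Bool) → ℝ) :
    cubeMean F = cubeMean fun y ↦ (F (Fin.cons false y) + F (Fin.cons true y)) / 2 := by
  have hsum : ∑ x, F x = ∑ y, (F (Fin.cons false y) + F (Fin.cons true y)) := by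
    rw [← (Fin.consEquiv fun _ ↦ Bool).sum_comp, Fintype.sum_prod_type, Fintype.sum_bool,
      sum_add_distrib, add_comm]
    rfl
  rw [cubeMean, cubeMean, hsum, ← sum_div, pow_succ]
  field_simp

-- With `x = (x₀, y)`, the next two are O'Donnell's `E₀ g` and `D₀ g`: `g x = E₀ g y + x₀ D₀ g y`.
def cubeHeadMean (g : (Fin (n + 1) → Bool) → ℝ) (y : Fin n → Bool) : ℝ :=
  (g (Fin.cons false y) + g (Fin.cons true y)) / 2

def cubeHeadDeriv (g : (Fin (n + 1) → Bool) → ℝ) (y : Fin n → Bool) : ℝ :=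
  (g (Fin.cons false y) - g (Fin.cons true y)) / 2

theorem cubeChar_map_succ_cons (S : Finset (Fin n)) (b : Bool) (y : Fin n → Bool) :
    cubeChar (S.map (Fin.succEmb n)) (Fin.cons b y) = cubeChar S y := by
  simp [cubeChar]

theorem cubeChar_insert_zero_map_succ_cons (S : Finset (Fin n)) (b : Bool) (y : Fin n → Bool) :
    cubeChar (insert 0 (S.map (Fin.succEmb n))) (Fin.cons b y) =
      (if b then -1 else 1) * cubeChar S y := by
  rw [cubeChar, prod_insert (by simp [Fin.succ_ne_zero]), Fin.cons_zero]
  simp [cubeChar]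

theorem cubeFourier_map_succ (g : (Fin (n + 1) → Bool) → ℝ) (S : Finset (Fin n)) :
    cubeFourier g (S.map (Fin.succEmb n)) = cubeFourier (cubeHeadMean g) S := by
  change cubeMean _ = cubeMean _
  rw [cubeMean_succ]
  congr 1 with y
  simp only [cubeChar_map_succ_cons, cubeHeadMean]
  ring

theorem cubeFourier_insert_zero_map_succ (g : (Fin (n + 1) → Bool) → ℝ) (S : Finset (Fin n)) :
    cubeFourier g (insert 0 (S.map (Fin.succEmb n))) = cubeFourier (cubeHeadDeriv g) S := by
  change cubeMean _ = cubeMean _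
  rw [cubeMean_succ]
  congr 1 with y
  simp only [cubeChar_insert_zero_map_succ_cons, cubeHeadDeriv, Bool.false_eq_true, if_true,
    if_false]
  ring

theorem sum_finset_fin_succ {M : Type*} [AddCommMonoid M] (F : Finset (Fin (n + 1)) → M) :
    ∑ T, F T = ∑ S : Finset (Fin n), F (S.map (Fin.succEmb n)) +
      ∑ S : Finset (Fin n), F (insert 0 (S.map (Fin.succEmb n))) := by
  have h0 : (0 : Fin (n + 1)) ∉ univ.map (Fin.succEmb n) := by simp [Fin.succ_ne_zero]
  have hpow : (univ.map (Fin.succEmb n)).powerset =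
      univ.image fun S : Finset (Fin n) ↦ S.map (Fin.succEmb n) := by
    ext T; simp [subset_map_iff, eq_comm]
  have huniv : (univ : Finset (Fin (n + 1))) = insert 0 (univ.map (Fin.succEmb n)) := by
    rw [Fin.univ_succ, cons_eq_insert]
    rfl
  rw [← powerset_univ, huniv, sum_powerset_insert h0, hpow,
    sum_image (map_injective _).injOn, sum_image (map_injective _).injOn]

theorem sum_pow_card_mul_sq_cubeFourier_succ (ρ : ℝ) (g : (Fin (n + 1) → Bool) → ℝ) :
    ∑ T, ρ ^ #T * cubeFourier g T ^ 2 =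
      ∑ S, ρ ^ #S * cubeFourier (cubeHeadMean g) S ^ 2 +
        ρ * ∑ S, ρ ^ #S * cubeFourier (cubeHeadDeriv g) S ^ 2 := by
  rw [sum_finset_fin_succ, mul_sum]
  congr 1 <;> refine sum_congr rfl fun S _ ↦ ?_
  · rw [card_map, cubeFourier_map_succ]
  · rw [card_insert_of_notMem (by simp [Fin.succ_ne_zero]), card_map,
      cubeFourier_insert_zero_map_succ, pow_succ]
    ring

end Tensorization

theorem cubeMean_rpow_two_div_add_le {n : ℕ} {p : ℝ} (hp1 : 1 ≤ p) (hp2 : p ≤ 2)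
    (e o : (Fin n → Bool) → ℝ) :
    cubeMean (fun y ↦ |e y| ^ p) ^ (2 / p) + (p - 1) * cubeMean (fun y ↦ |o y| ^ p) ^ (2 / p) ≤
      cubeMean (fun y ↦ (|e y + o y| ^ p + |e y - o y| ^ p) / 2) ^ (2 / p) := by
  have hp0 : 0 < p := by linarith
  have hp1' : 0 ≤ p - 1 := by linarith
  have hr : 1 ≤ 2 / p := by rw [le_div_iff₀ hp0]; linarith
  have hexp : p / 2 * (2 / p) = 1 := by field_simp
  -- Minkowski in `ℓ^(2/p)` for the vectors `(|e y|^p, (p-1)^(p/2) |o y|^p)`, then the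
  -- two-point inequality for each of them.
  let u y := |e y| ^ p
  let v y := (p - 1) ^ (p / 2) * |o y| ^ p
  let w y := (|e y + o y| ^ p + |e y - o y| ^ p) / 2
  have hpoint y : (u y ^ (2 / p) + v y ^ (2 / p)) ^ (1 / (2 / p)) ≤ w y := by
    rw [abs_rpow_rpow_two_div hp0.ne', mul_rpow (by positivity) (by positivity),
      abs_rpow_rpow_two_div hp0.ne', ← rpow_mul hp1', hexp, rpow_one, one_div_div]
    exact two_point_inequality hp1 hp2 (e y) (o y)
  have key : (∑ y, u y) ^ (2 / p) + (∑ y, v y) ^ (2 / p) ≤ (∑ y, w y) ^ (2 / p) := by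
    rw [← rpow_inv_le_iff_of_pos (by positivity) (by positivity) (by positivity), ← one_div]
    exact (Lp_norm_pair_sum_le_sum univ (fun y _ ↦ by positivity) (fun y _ ↦ by positivity)
      hr).trans (sum_le_sum fun y _ ↦ hpoint y)
  have hc : (0 : ℝ) ≤ (2 ^ n)⁻¹ := by positivity
  have := mul_le_mul_of_nonneg_left key (rpow_nonneg hc (2 / p))
  rw [mul_add, ← mul_rpow hc (by positivity), ← mul_rpow hc (by positivity),
    ← mul_rpow hc (by positivity)] at this
  refine le_of_eq_of_le ?_ this
  congr 1
  rw [← mul_sum, mul_left_comm, mul_rpow (by positivity) (by positivity), ← rpow_mul hp1', hexp,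
    rpow_one]
  rfl

theorem sum_pow_card_mul_sq_cubeFourier_le {p : ℝ} (hp1 : 1 ≤ p) (hp2 : p ≤ 2) :
    ∀ {n : ℕ} (g : (Fin n → Bool) → ℝ),
      ∑ S, (p - 1) ^ #S * cubeFourier g S ^ 2 ≤ cubeMean (fun x ↦ |g x| ^ p) ^ (2 / p)
  | 0, g => by
    simp [cubeFourier, cubeMean, cubeChar, eq_empty_of_isEmpty,
      abs_rpow_rpow_two_div (by linarith : p ≠ 0)]
  | n + 1, g => by
    rw [sum_pow_card_mul_sq_cubeFourier_succ, cubeMean_succ]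
    calc _ ≤ cubeMean (fun y ↦ |cubeHeadMean g y| ^ p) ^ (2 / p) +
          (p - 1) * cubeMean (fun y ↦ |cubeHeadDeriv g y| ^ p) ^ (2 / p) :=
          add_le_add (sum_pow_card_mul_sq_cubeFourier_le hp1 hp2 _)
            (mul_le_mul_of_nonneg_left (sum_pow_card_mul_sq_cubeFourier_le hp1 hp2 _)
              (by linarith))
      _ ≤ _ := cubeMean_rpow_two_div_add_le hp1 hp2 _ _
      _ = _ := by simp only [cubeHeadMean, cubeHeadDeriv]; ring_nf

theorem mul_abs_rpow_sub_two_mul {q : ℝ} (hq : q ≠ 0) (x : ℝ) :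
    x * (|x| ^ (q - 2) * x) = |x| ^ q := by
  rcases eq_or_ne x 0 with rfl | hx
  · simp [zero_rpow hq]
  · rw [mul_left_comm, ← abs_mul_abs_self, ← sq, ← rpow_two, ← rpow_add (abs_pos.2 hx),
      sub_add_cancel]

theorem abs_abs_rpow_sub_two_mul_rpow {q : ℝ} (hq : 1 < q) (x : ℝ) :
    |(|x| ^ (q - 2) * x)| ^ (q / (q - 1)) = |x| ^ q := by
  rcases eq_or_ne x 0 with rfl | hx
  · simp [zero_rpow (by linarith : q ≠ 0), zero_rpow (by positivity : q / (q - 1) ≠ 0)]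
  · rw [abs_mul, abs_of_nonneg (by positivity), ← rpow_add_one (abs_pos.2 hx).ne',
      ← rpow_mul (abs_nonneg x)]
    congr 1
    field_simp [(by linarith : q - 1 ≠ 0)]
    ring

theorem rpow_two_div_le_of_sq_le_mul_rpow {M K q : ℝ} (hM : 0 ≤ M) (hK : 0 ≤ K) (hq : 0 < q)
    (h : M ^ 2 ≤ K * M ^ (2 - 2 / q)) : M ^ (2 / q) ≤ K := by
  rcases hM.eq_or_lt with rfl | hM
  · rwa [zero_rpow (by positivity)]
  · have hsplit : M ^ 2 = M ^ (2 / q) * M ^ (2 - 2 / q) := by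
      rw [← rpow_add hM, ← rpow_two]
      ring_nf
    exact le_of_mul_le_mul_right (hsplit ▸ h) (rpow_pos_of_pos hM _)

theorem sq_sum_mul_le_of_mul_eq_one {ι : Type*} (s : Finset ι) {w w' a b : ι → ℝ}
    (hw : ∀ i ∈ s, 0 ≤ w i) (hw' : ∀ i ∈ s, 0 ≤ w' i) (hww' : ∀ i ∈ s, w i * w' i = 1) :
    (∑ i ∈ s, a i * b i) ^ 2 ≤ (∑ i ∈ s, w i * a i ^ 2) * ∑ i ∈ s, w' i * b i ^ 2 :=
  sum_sq_le_sum_mul_sum_of_sq_le_mul s (fun i hi ↦ mul_nonneg (hw i hi) (sq_nonneg _))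
    (fun i hi ↦ mul_nonneg (hw' i hi) (sq_nonneg _)) fun i hi ↦ le_of_eq <| by
      rw [mul_mul_mul_comm, hww' i hi, one_mul, mul_pow]

theorem cubeNorm_sq_le_of_degree_le {n d : ℕ} (f : (Fin n → Bool) → ℝ)
    (hdeg : ∀ S : Finset (Fin n), d < #S → cubeFourier f S = 0) {q : ℝ} (hq : 2 ≤ q) :
    cubeNorm q f ^ 2 ≤ (q - 1) ^ d * cubeNorm 2 f ^ 2 := by
  have hq1 : 0 < q - 1 := by linarith
  have hp0 : 0 ≤ q / (q - 1) - 1 := by rw [le_sub_iff_add_le, zero_add, le_div_iff₀ hq1]; linarith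
  have hp1 : 1 ≤ q / (q - 1) := by linarith
  have hp2 : q / (q - 1) ≤ 2 := by rw [div_le_iff₀ hq1]; linarith
  have hpq : (q - 1) * (q / (q - 1) - 1) = 1 := by field_simp; ring
  have hexp : 2 / (q / (q - 1)) = 2 - 2 / q := by field_simp
  set p := q / (q - 1)
  set g : (Fin n → Bool) → ℝ := fun x ↦ |f x| ^ (q - 2) * f x
  set M := cubeMean fun x ↦ |f x| ^ q
  have hfg : ∑ S, cubeFourier f S * cubeFourier g S = M := by
    simp only [sum_cubeFourier_mul_cubeFourier, g, mul_abs_rpow_sub_two_mul (by linarith : q ≠ 0),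
      M]
  have hg : cubeMean (fun x ↦ |g x| ^ p) = M := by
    simp only [g, p, abs_abs_rpow_sub_two_mul_rpow (by linarith : 1 < q), M]
  have hCS : M ^ 2 ≤ (∑ S, (q - 1) ^ #S * cubeFourier f S ^ 2) *
      ∑ S, (p - 1) ^ #S * cubeFourier g S ^ 2 :=
    hfg ▸ sq_sum_mul_le_of_mul_eq_one univ (fun S _ ↦ pow_nonneg hq1.le _)
      (fun S _ ↦ pow_nonneg hp0 _) fun S _ ↦ by rw [← mul_pow, hpq, one_pow]
  have hbound : M ^ 2 ≤ (q - 1) ^ d * cubeNorm 2 f ^ 2 * M ^ (2 - 2 / q) := by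
    refine hCS.trans (mul_le_mul (sum_pow_card_mul_sq_cubeFourier_le_of_degree_le (by linarith)
      f hdeg) ?_ (sum_nonneg fun S _ ↦ ?_) (by positivity))
    · simpa [hg, hexp] using sum_pow_card_mul_sq_cubeFourier_le hp1 hp2 g
    · positivity
  rw [cubeNorm_sq]
  exact rpow_two_div_le_of_sq_le_mul_rpow (cubeMean_nonneg fun x ↦ by positivity)
    (by positivity) (by linarith) hbound

/-- Hypercontractive norm inequality for low-degree polynomials on the boolean cube:
if `f` has degree at most `d` (all Fourier coefficients on sets of size `> d` vanish),
then for all `q ≥ 2`, `‖f‖_q ≤ (q-1)^{d/2} ‖f‖_2`. -/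
theorem cubeNorm_le_of_degree_le {n d : ℕ} (f : (Fin n → Bool) → ℝ)
    (hdeg : ∀ S : Finset (Fin n), d < S.card → cubeFourier f S = 0)
    (q : ℝ) (hq : 2 ≤ q) :
    cubeNorm q f ≤ (q - 1) ^ ((d : ℝ) / 2) * cubeNorm 2 f := by
  have hq1 : 0 ≤ q - 1 := by linarith
  have hsq : ((q - 1) ^ ((d : ℝ) / 2) * cubeNorm 2 f) ^ 2 = (q - 1) ^ d * cubeNorm 2 f ^ 2 := by
    rw [mul_pow, ← rpow_natCast _ 2, ← rpow_mul hq1]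
    norm_num
  refine (pow_le_pow_iff_left₀ (cubeNorm_nonneg q f)
    (mul_nonneg (rpow_nonneg hq1 _) (cubeNorm_nonneg 2 f)) two_ne_zero).1 ?_
  exact hsq ▸ cubeNorm_sq_le_of_degree_le f hdeg hq
end
end

section
/- Let Δ be a Hermitian operator on ℂ^n. Then ∫ (tr(Δ |ψ⟩⟨ψ|))² dψ = ((tr Δ)² + tr(Δ²)) / (n(n+1)), where the integral is over the uniform (unitarily invariant) probability measure on the unit vectors ψ of ℂ^n. -/
/-!
Expanding the square, the integral is the contraction of `Δ ⊗ Δ` with the fourth-moment tensor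
`M a b c d = ∫ ψ_a ψ̄_b ψ_c ψ̄_d dψ`. Invariance under diagonal phase unitaries kills `M a b c d`
unless `{a, c} = {b, d}`; invariance under the reflection that mixes coordinates `a ≠ c` with
weights `3/5, 4/5` gives `M a a a a = 2 M a a c c`; and `∑_{a,c} M a a c c = ∫ ‖ψ‖⁴ = 1`.
Hence `M a b c d = (δ_ab δ_cd + δ_ad δ_cb) / (n (n + 1))`, and contracting with `Δ ⊗ Δ`
gives `((tr Δ)² + tr Δ²) / (n (n + 1))`.
-/

noncomputable section

open MeasureTheory Matrix

instance {n : ℕ} : MeasurableSpace (EuclideanSpace ℂ (Fin n)) :=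
  MeasurableSpace.comap WithLp.ofLp MeasurableSpace.pi
instance {n : ℕ} : BorelSpace (EuclideanSpace ℂ (Fin n)) := PiLp.borelSpace 2

/-- The rank-one projector `|ψ⟩⟨ψ|`, with entries `ψ_a ψ̄_b`. -/
def rankOneProj {n : ℕ} (ψ : EuclideanSpace ℂ (Fin n)) : Matrix (Fin n) (Fin n) ℂ :=
  Matrix.of fun a b => ψ a * (starRingEnd ℂ) (ψ b)

open ComplexConjugate

local notation "𝕊" ι => Metric.sphere (0 : EuclideanSpace ℂ ι) 1

variable {ι : Type*} [Fintype ι]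

def sphereMap (U : EuclideanSpace ℂ ι ≃ₗᵢ[ℂ] EuclideanSpace ℂ ι) (ψ : 𝕊 ι) : 𝕊 ι :=
  ⟨U ψ, by simp⟩

theorem continuous_sphereMap (U : EuclideanSpace ℂ ι ≃ₗᵢ[ℂ] EuclideanSpace ℂ ι) :
    Continuous (sphereMap U) :=
  (U.continuous.comp continuous_subtype_val).subtype_mk _

theorem integral_comp_sphereMap {E : Type*} [NormedAddCommGroup E] [NormedSpace ℝ E]
    {μ : Measure (𝕊 ι)} {U : EuclideanSpace ℂ ι ≃ₗᵢ[ℂ] EuclideanSpace ℂ ι}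
    (hU : μ.map (sphereMap U) = μ) {f : (𝕊 ι) → E} (hf : AEStronglyMeasurable f μ) :
    ∫ ψ, f (sphereMap U ψ) ∂μ = ∫ ψ, f ψ ∂μ := by
  conv_rhs => rw [← hU]
  rw [integral_map (continuous_sphereMap U).aemeasurable (by rwa [hU])]

def IsUnitarilyInvariant (μ : Measure (𝕊 ι)) : Prop :=
  ∀ U : EuclideanSpace ℂ ι ≃ₗᵢ[ℂ] EuclideanSpace ℂ ι, μ.map (sphereMap U) = μ

def diagonalPhase (z : ι → unitary ℂ) : EuclideanSpace ℂ ι ≃ₗᵢ[ℂ] EuclideanSpace ℂ ι :=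
  LinearIsometryEquiv.piLpCongrRight 2 fun j => z j • LinearIsometryEquiv.refl ℂ ℂ

@[simp]
theorem diagonalPhase_apply (z : ι → unitary ℂ) (ψ : EuclideanSpace ℂ ι) (j : ι) :
    diagonalPhase z ψ j = z j * ψ j := rfl

theorem reflection_single_add_single_apply [DecidableEq ι] {a c : ι} (hac : a ≠ c)
    (ψ : EuclideanSpace ℂ ι) :
    (ℂ ∙ (EuclideanSpace.single a 2 + EuclideanSpace.single c 1)).reflection ψ a
      = (3 * ψ a + 4 * ψ c) / 5 := by
  have hu : inner ℂ (EuclideanSpace.single a (2:ℂ) + EuclideanSpace.single c 1)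
      (EuclideanSpace.single a (2:ℂ) + EuclideanSpace.single c 1) = 5 := by
    simp only [inner_add_left, EuclideanSpace.inner_single_left]
    simp [hac, hac.symm, map_ofNat]
    norm_num
  rw [inner_self_eq_norm_sq_to_K] at hu
  rw [Submodule.reflection_singleton_apply, hu]
  simp [inner_add_left, EuclideanSpace.inner_single_left, hac, map_ofNat]
  ring

def quarticMonomial (a b c d : ι) (ψ : 𝕊 ι) : ℂ :=
  ψ.1 a * conj (ψ.1 b) * ψ.1 c * conj (ψ.1 d)

def fourthMoment (μ : Measure (𝕊 ι)) (a b c d : ι) : ℂ :=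
  ∫ ψ, quarticMonomial a b c d ψ ∂μ

theorem continuous_quarticMonomial (a b c d : ι) :
    Continuous (quarticMonomial (ι := ι) a b c d) := by
  unfold quarticMonomial; fun_prop

theorem sum_mul_conj_eq_one (ψ : 𝕊 ι) : ∑ j, ψ.1 j * conj (ψ.1 j) = 1 := by
  have h := inner_self_eq_norm_sq_to_K (𝕜 := ℂ) ψ.1
  rw [mem_sphere_zero_iff_norm.1 ψ.2, PiLp.inner_apply] at h
  simpa [Complex.mul_conj'] using h

section

variable {μ : Measure (𝕊 ι)}

theorem fourthMoment_swap_pairs (a b c d : ι) :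
    fourthMoment μ a b c d = fourthMoment μ c d a b := by
  simp only [fourthMoment, quarticMonomial]
  congr 1 with ψ
  ring

theorem fourthMoment_swap_conj (a b c d : ι) :
    fourthMoment μ a b c d = fourthMoment μ a d c b := by
  simp only [fourthMoment, quarticMonomial]
  congr 1 with ψ
  ring

variable (μ) [IsFiniteMeasure μ]

theorem integrable_quarticMonomial (a b c d : ι) :
    Integrable (quarticMonomial a b c d) μ :=
  (continuous_quarticMonomial a b c d).integrable_of_hasCompactSupport (.of_compactSpace _)

theorem integral_sum_mul_quarticMonomial (s : Finset ι) (T : ι → ι → ι → ι → ℂ) :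
    ∫ ψ, ∑ a ∈ s, ∑ b ∈ s, ∑ c ∈ s, ∑ d ∈ s, T a b c d * quarticMonomial a b c d ψ ∂μ
      = ∑ a ∈ s, ∑ b ∈ s, ∑ c ∈ s, ∑ d ∈ s, T a b c d * fourthMoment μ a b c d := by
  have hT a b c d := (integrable_quarticMonomial μ a b c d).const_mul (T a b c d)
  simp only [fourthMoment, ← integral_const_mul]
  rw [integral_finsetSum _ fun a _ => integrable_finsetSum _ fun b _ =>
    integrable_finsetSum _ fun c _ => integrable_finsetSum _ fun d _ => hT a b c d]
  refine Finset.sum_congr rfl fun a _ => ?_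
  rw [integral_finsetSum _ fun b _ => integrable_finsetSum _ fun c _ =>
    integrable_finsetSum _ fun d _ => hT a b c d]
  refine Finset.sum_congr rfl fun b _ => ?_
  rw [integral_finsetSum _ fun c _ => integrable_finsetSum _ fun d _ => hT a b c d]
  exact Finset.sum_congr rfl fun c _ => integral_finsetSum _ fun d _ => hT a b c d

end

theorem sum_fourthMoment_diag (μ : Measure (𝕊 ι)) [IsProbabilityMeasure μ] :
    ∑ a, ∑ c, fourthMoment μ a a c c = 1 :=
  calc ∑ a, ∑ c, fourthMoment μ a a c c = ∫ ψ, ∑ a, ∑ c, quarticMonomial a a c c ψ ∂μ := by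
        rw [integral_finsetSum _ fun a _ => integrable_finsetSum _ fun c _ =>
          integrable_quarticMonomial μ a a c c]
        exact Finset.sum_congr rfl fun a _ =>
          (integral_finsetSum _ fun c _ => integrable_quarticMonomial μ a a c c).symm
    _ = ∫ _ψ, (1 : ℂ) ∂μ := by
        congr 1 with ψ
        rw [← one_mul 1, ← sum_mul_conj_eq_one ψ, Finset.sum_mul_sum]
        simp only [quarticMonomial, mul_assoc]
    _ = 1 := by simp

section

variable {μ : Measure (𝕊 ι)} [IsFiniteMeasure μ]

theorem fourthMoment_eq_zero_of_phase {z : ι → unitary ℂ}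
    (hz : μ.map (sphereMap (diagonalPhase z)) = μ) {a b c d : ι}
    (h : z a * star (z b) * z c * star (z d) ≠ 1) : fourthMoment μ a b c d = 0 := by
  have hphase : fourthMoment μ a b c d
      = ((z a * star (z b) * z c * star (z d) : unitary ℂ) : ℂ) * fourthMoment μ a b c d :=
    calc fourthMoment μ a b c d
        = ∫ ψ, quarticMonomial a b c d (sphereMap (diagonalPhase z) ψ) ∂μ :=
          (integral_comp_sphereMap hz
            (integrable_quarticMonomial μ a b c d).aestronglyMeasurable).symm
      _ = ∫ ψ, ((z a * star (z b) * z c * star (z d) : unitary ℂ) : ℂ)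
            * quarticMonomial a b c d ψ ∂μ := by
          congr 1 with ψ
          simp only [quarticMonomial, sphereMap, diagonalPhase_apply, map_mul, Submonoid.coe_mul,
            Unitary.coe_star, Complex.star_def]
          ring
      _ = _ := integral_const_mul _ _
  have hne : ((z a * star (z b) * z c * star (z d) : unitary ℂ) : ℂ) ≠ 1 := by
    rwa [Ne, ← Submonoid.coe_one, Subtype.coe_inj]
  by_contra hM
  exact hne (mul_right_cancel₀ hM (hphase.symm.trans (one_mul _).symm))

theorem fourthMoment_eq_zero (hμ : IsUnitarilyInvariant μ) {a b c d : ι}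
    (h : ¬((a = b ∧ c = d) ∨ (a = d ∧ c = b))) : fourthMoment μ a b c d = 0 := by
  classical
  let i : unitary ℂ := ⟨Complex.I, by simp [Unitary.mem_iff]⟩
  have hi : i ≠ 1 := by simp [i, ← Subtype.coe_inj, Complex.ext_iff]
  have hii : i * i ≠ 1 := by norm_num [i, ← Subtype.coe_inj, Complex.ext_iff]
  -- Multiplying coordinate `k` by `i` scales the moment by `i ^ m`, where `m` counts `k` among
  -- `a, c` minus among `b, d`; off the pairings some `k` has `m = ±1` or `m = ±2`.
  let z (k j : ι) : unitary ℂ := if j = k then i else 1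
  obtain ⟨k, hk⟩ : ∃ k, z k a * star (z k b) * z k c * star (z k d) ≠ 1 := by
    by_cases hk : a = b ∨ a = d
    · refine ⟨c, ?_⟩
      rcases hk with rfl | rfl
      · have hdc : d ≠ c := by tauto
        by_cases hac : a = c <;> simp [z, hdc, hac, hi]
      · have hbc : b ≠ c := by tauto
        by_cases hac : a = c <;> simp [z, hbc, hac, hi, mul_assoc]
    · refine ⟨a, ?_⟩
      have hba : b ≠ a := by tauto
      have hda : d ≠ a := by tauto
      by_cases hca : c = a <;> simp [z, hba, hda, hca, hi, hii]
  exact fourthMoment_eq_zero_of_phase (hμ _) hk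

variable [DecidableEq ι]

theorem fourthMoment_reflection (hμ : IsUnitarilyInvariant μ) {a c : ι} (hac : a ≠ c) :
    625 * fourthMoment μ a a a a = 81 * fourthMoment μ a a a a + 256 * fourthMoment μ c c c c
      + 576 * fourthMoment μ a a c c := by
  set U := (ℂ ∙ (EuclideanSpace.single a (2 : ℂ) + EuclideanSpace.single c 1)).reflection
  have hU (ψ : EuclideanSpace ℂ ι) : U ψ a = (3 * ψ a + 4 * ψ c) / 5 :=
    reflection_single_add_single_apply hac ψ
  let w (j : ι) : ℂ := if j = a then 3 else 4
  have hpt (ψ : 𝕊 ι) : quarticMonomial a a a a (sphereMap U ψ)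
      = ∑ i ∈ {a, c}, ∑ j ∈ {a, c}, ∑ k ∈ {a, c}, ∑ l ∈ {a, c},
          w i * w j * w k * w l / 625 * quarticMonomial i j k l ψ := by
    simp only [Finset.sum_pair hac, quarticMonomial, sphereMap, hU, w, if_pos, if_neg hac.symm,
      map_div₀, map_add, map_mul, map_ofNat]
    ring
  have h : fourthMoment μ a a a a = ∑ i ∈ {a, c}, ∑ j ∈ {a, c}, ∑ k ∈ {a, c}, ∑ l ∈ {a, c},
      w i * w j * w k * w l / 625 * fourthMoment μ i j k l :=
    calc fourthMoment μ a a a a = ∫ ψ, quarticMonomial a a a a (sphereMap U ψ) ∂μ :=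
          (integral_comp_sphereMap (hμ U)
            (integrable_quarticMonomial μ a a a a).aestronglyMeasurable).symm
      _ = _ := integral_congr_ae (.of_forall hpt)
      _ = _ := integral_sum_mul_quarticMonomial μ {a, c} _
  simp only [Finset.sum_pair hac, w, if_pos, if_neg hac.symm] at h
  -- the ten moments that are not pairings vanish
  simp (disch := simp [hac, hac.symm]) only [fourthMoment_eq_zero hμ, mul_zero, add_zero,
    zero_add] at h
  rw [fourthMoment_swap_conj a c c a, fourthMoment_swap_conj c a a c,
    fourthMoment_swap_pairs c c a a] at h
  linear_combination 625 * h

theorem fourthMoment_self_eq (hμ : IsUnitarilyInvariant μ) (a c : ι) :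
    fourthMoment μ a a a a = fourthMoment μ c c c c := by
  rcases eq_or_ne a c with rfl | hac
  · rfl
  have h₁ := fourthMoment_reflection hμ hac
  have h₂ := fourthMoment_reflection hμ hac.symm
  rw [fourthMoment_swap_pairs c c a a] at h₂
  linear_combination (h₁ - h₂) / 800

theorem fourthMoment_self_eq_two_mul (hμ : IsUnitarilyInvariant μ) {a c : ι} (hac : a ≠ c) :
    fourthMoment μ a a a a = 2 * fourthMoment μ a a c c := by
  linear_combination (fourthMoment_reflection hμ hac - 256 * fourthMoment_self_eq hμ a c) / 288

end

section

variable [DecidableEq ι] {μ : Measure (𝕊 ι)} [IsProbabilityMeasure μ]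

theorem fourthMoment_diag (hμ : IsUnitarilyInvariant μ) (a c : ι) :
    fourthMoment μ a a c c
      = (1 + if a = c then 1 else 0) / (Fintype.card ι * (Fintype.card ι + 1)) := by
  have hD (i k : ι) :
      2 * fourthMoment μ i i k k = (1 + if i = k then 1 else 0) * fourthMoment μ a a a a := by
    rcases eq_or_ne i k with rfl | hik
    · rw [if_pos rfl, fourthMoment_self_eq hμ i a]
      ring
    · rw [if_neg hik, ← fourthMoment_self_eq hμ i a, fourthMoment_self_eq_two_mul hμ hik]
      ring
  have hsum : (Fintype.card ι * (Fintype.card ι + 1)) * fourthMoment μ a a a a = 2 :=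
    calc (Fintype.card ι * (Fintype.card ι + 1)) * fourthMoment μ a a a a
        = ∑ i : ι, ∑ k : ι, (1 + if i = k then 1 else 0) * fourthMoment μ a a a a := by
          simp [Finset.sum_add_distrib, add_mul]
          ring
      _ = 2 * ∑ i, ∑ k, fourthMoment μ i i k k := by simp only [Finset.mul_sum, hD]
      _ = 2 := by rw [sum_fourthMoment_diag, mul_one]
  have hN : (Fintype.card ι * (Fintype.card ι + 1) : ℂ) ≠ 0 := by
    have := Fintype.card_pos_iff.2 ⟨a⟩
    exact_mod_cast (by positivity : Fintype.card ι * (Fintype.card ι + 1) ≠ 0)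
  rw [eq_div_iff hN]
  linear_combination (Fintype.card ι * (Fintype.card ι + 1) : ℂ) / 2 * hD a c
    + (1 + if a = c then 1 else 0 : ℂ) / 2 * hsum

theorem fourthMoment_eq (hμ : IsUnitarilyInvariant μ) (a b c d : ι) :
    fourthMoment μ a b c d
      = ((if a = b ∧ c = d then 1 else 0) + (if a = d ∧ c = b then 1 else 0))
        / (Fintype.card ι * (Fintype.card ι + 1)) := by
  by_cases h₁ : a = b ∧ c = d
  · obtain ⟨rfl, rfl⟩ := h₁
    simp [fourthMoment_diag hμ, eq_comm]
  by_cases h₂ : a = d ∧ c = b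
  · obtain ⟨rfl, rfl⟩ := h₂
    have hac : a ≠ c := fun h => h₁ ⟨h, h.symm⟩
    rw [fourthMoment_swap_conj, fourthMoment_diag hμ, if_neg h₁, if_neg hac, if_pos ⟨rfl, rfl⟩,
      zero_add, add_zero]
  · rw [fourthMoment_eq_zero hμ (not_or.2 ⟨h₁, h₂⟩), if_neg h₁, if_neg h₂, add_zero, zero_div]

theorem sum_mul_fourthMoment (hμ : IsUnitarilyInvariant μ) (Δ : Matrix ι ι ℂ) :
    ∑ a, ∑ b, ∑ c, ∑ d, Δ b a * Δ d c * fourthMoment μ a b c d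
      = (Δ.trace ^ 2 + (Δ * Δ).trace) / (Fintype.card ι * (Fintype.card ι + 1)) := by
  simp only [fourthMoment_eq hμ, ← mul_div_assoc, ← Finset.sum_div]
  congr 1
  simp [mul_add, Finset.sum_add_distrib, ite_and, Matrix.trace, Matrix.mul_apply, sq,
    Finset.sum_mul_sum]
  exact Finset.sum_congr rfl fun _ _ => Finset.sum_congr rfl fun _ _ => mul_comm _ _

end

theorem trace_mul_rankOneProj {n : ℕ} (Δ : Matrix (Fin n) (Fin n) ℂ)
    (ψ : EuclideanSpace ℂ (Fin n)) :
    (Δ * rankOneProj ψ).trace = ∑ a, ∑ b, Δ b a * (ψ a * conj (ψ b)) := by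
  simp only [Matrix.trace, Matrix.diag, Matrix.mul_apply, rankOneProj, Matrix.of_apply]
  exact Finset.sum_comm

theorem trace_mul_rankOneProj_sq {n : ℕ} (Δ : Matrix (Fin n) (Fin n) ℂ) (ψ : 𝕊 (Fin n)) :
    (Δ * rankOneProj ψ.1).trace ^ 2
      = ∑ a, ∑ b, ∑ c, ∑ d, Δ b a * Δ d c * quarticMonomial a b c d ψ := by
  simp only [trace_mul_rankOneProj, sq, Finset.sum_mul, Finset.mul_sum, quarticMonomial]
  congr! 4
  ring

/-- Second-moment formula for the uniform measure on pure states: if `μ` is the uniform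
(unitarily invariant) probability measure on the unit sphere of `ℂ^n` and `Δ` is Hermitian,
then `∫ (tr(Δ|ψ⟩⟨ψ|))² dψ = ((tr Δ)² + tr(Δ²)) / (n(n+1))`. -/
theorem integral_trace_sq_eq {n : ℕ}
    (μ : Measure (Metric.sphere (0 : EuclideanSpace ℂ (Fin n)) 1))
    [IsProbabilityMeasure μ]
    (hinv : ∀ U : EuclideanSpace ℂ (Fin n) ≃ₗᵢ[ℂ] EuclideanSpace ℂ (Fin n),
      Measure.map (fun ψ : Metric.sphere (0 : EuclideanSpace ℂ (Fin n)) 1 =>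
        (⟨U ψ.1, by
          rw [mem_sphere_zero_iff_norm, U.norm_map, ← mem_sphere_zero_iff_norm]
          exact ψ.2⟩ : Metric.sphere (0 : EuclideanSpace ℂ (Fin n)) 1)) μ = μ)
    (Δ : Matrix (Fin n) (Fin n) ℂ) :
    ∫ ψ : Metric.sphere (0 : EuclideanSpace ℂ (Fin n)) 1,
        ((Δ * rankOneProj (ψ : EuclideanSpace ℂ (Fin n))).trace) ^ 2 ∂μ
      = ((Δ.trace) ^ 2 + (Δ * Δ).trace) / ((n : ℂ) * ((n : ℂ) + 1)) := by
  calc _ = ∫ ψ, ∑ a, ∑ b, ∑ c, ∑ d, Δ b a * Δ d c * quarticMonomial a b c d ψ ∂μ :=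
        integral_congr_ae (.of_forall (trace_mul_rankOneProj_sq Δ))
    _ = ∑ a, ∑ b, ∑ c, ∑ d, Δ b a * Δ d c * fourthMoment μ a b c d :=
        integral_sum_mul_quarticMonomial μ _ _
    _ = _ := by rw [sum_mul_fourthMoment hinv, Fintype.card_fin]
end
end

section
/- Let H be a Hermitian operator on a finite-dimensional complex Hilbert space with eigendecomposition H = Σ_k λ_k |v_k⟩⟨v_k| (the v_k forming an orthonormal eigenbasis), let ψ be a unit vector, let t ≥ 0, and let μ ≥ 0 satisfy μt ≤ π. Then |⟨ψ| e^{−iHt} |ψ⟩| ≥ cos(μt) − 2 Σ_{k : |λ_k| > μ} |⟨v_k|ψ⟩|². -/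
/-!
The number `⟨ψ|e^{-iHt}|ψ⟩ = ∑ₖ e^{-iλₖt} pₖ` with `pₖ = |⟨vₖ|ψ⟩|²` is an average of points
of the unit circle against the probability weights `pₖ` (Parseval), so its modulus is at least
its real part `∑ₖ cos(λₖt) pₖ`. Since `cos` decreases on `[0, π]`, every low-energy term
(`|λₖ| ≤ μ`) has `cos(λₖt) ≥ cos(μt)`, while every high-energy term has `cos(λₖt) ≥ -1 ≥ cos(μt) - 2`.
-/

open Finset

theorem sub_two_mul_sum_filter_le_sum_mul {ι : Type*} {s : Finset ι} {p f : ι → ℝ} {c : ℝ}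
    (P : ι → Prop) [DecidablePred P] (hp : ∀ k ∈ s, 0 ≤ p k) (hsum : ∑ k ∈ s, p k = 1)
    (hc : c ≤ 1) (hf : ∀ k ∈ s, -1 ≤ f k) (hgood : ∀ k ∈ s, ¬ P k → c ≤ f k) :
    c - 2 * ∑ k ∈ s with P k, p k ≤ ∑ k ∈ s, f k * p k := by
  have hhigh : (c - 2) * ∑ k ∈ s with P k, p k ≤ ∑ k ∈ s with P k, f k * p k := by
    rw [mul_sum]
    refine sum_le_sum fun k hk => ?_
    have hks := (mem_filter.mp hk).1
    exact mul_le_mul_of_nonneg_right (by linarith [hf k hks]) (hp k hks)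
  have hlow : c * ∑ k ∈ s with ¬ P k, p k ≤ ∑ k ∈ s with ¬ P k, f k * p k := by
    rw [mul_sum]
    refine sum_le_sum fun k hk => ?_
    obtain ⟨hks, hPk⟩ := mem_filter.mp hk
    exact mul_le_mul_of_nonneg_right (hgood k hks hPk) (hp k hks)
  have hsplit := sum_filter_add_sum_filter_not s P p
  rw [← sum_filter_add_sum_filter_not s P]
  linear_combination hhigh + hlow - c * (hsplit.trans hsum)

theorem Real.cos_mul_le_cos_mul_of_abs_le {x μ t : ℝ} (ht : 0 ≤ t) (hμt : μ * t ≤ Real.pi)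
    (hx : |x| ≤ μ) : cos (μ * t) ≤ cos (x * t) := by
  have hxt : |x * t| ≤ μ * t := by
    rw [abs_mul, abs_of_nonneg ht]
    exact mul_le_mul_of_nonneg_right hx ht
  rw [← cos_abs (x * t)]
  exact cos_le_cos_of_nonneg_of_le_pi (abs_nonneg _) hμt hxt

theorem Complex.re_exp_neg_I_mul_mul_ofReal_sq (x t r : ℝ) :
    (exp (-I * x * t) * (r : ℂ) ^ 2).re = Real.cos (x * t) * r ^ 2 := by
  have harg : -I * x * t = ((-(x * t) : ℝ) : ℂ) * I := by push_cast; ring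
  rw [harg, ← ofReal_pow, re_mul_ofReal, exp_ofReal_mul_I_re, Real.cos_neg]

theorem slow_evolution_bound_general {E : Type*} [NormedAddCommGroup E] [InnerProductSpace ℂ E]
    {ι : Type*} [Fintype ι]
    (v : ι → E) (hv : Orthonormal ℂ v)
    (hspan : Submodule.span ℂ (Set.range v) = ⊤)
    (lam : ι → ℝ) (ψ : E) (hψ : ‖ψ‖ = 1)
    (t μ : ℝ) (ht : 0 ≤ t) (hμt : μ * t ≤ Real.pi) :
    Real.cos (μ * t) -
        2 * ∑ k ∈ Finset.univ.filter fun k => μ < |lam k|, ‖(inner ℂ (v k) ψ : ℂ)‖ ^ 2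
      ≤ ‖(∑ k, Complex.exp (-Complex.I * (lam k) * t) *
          ((‖(inner ℂ (v k) ψ : ℂ)‖ : ℂ)) ^ 2)‖ := by
  have hparseval : ∑ k, ‖(inner ℂ (v k) ψ : ℂ)‖ ^ 2 = 1 := by
    simpa [hψ] using (OrthonormalBasis.mk hv hspan.ge).sum_sq_norm_inner_right ψ
  calc Real.cos (μ * t) - 2 * ∑ k with μ < |lam k|, ‖(inner ℂ (v k) ψ : ℂ)‖ ^ 2
      ≤ ∑ k, Real.cos (lam k * t) * ‖(inner ℂ (v k) ψ : ℂ)‖ ^ 2 :=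
        sub_two_mul_sum_filter_le_sum_mul _ (fun _ _ => by positivity) hparseval
          (Real.cos_le_one _) (fun _ _ => Real.neg_one_le_cos _)
          (fun _ _ hk => Real.cos_mul_le_cos_mul_of_abs_le ht hμt (not_lt.mp hk))
    _ = (∑ k, Complex.exp (-Complex.I * (lam k) * t) *
          ((‖(inner ℂ (v k) ψ : ℂ)‖ : ℂ)) ^ 2).re := by
        simp only [Complex.re_sum, Complex.re_exp_neg_I_mul_mul_ofReal_sq]
    _ ≤ _ := Complex.re_le_norm _

/-- Slow time evolution on low-energy states: let `H` be a Hermitian operator on a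
finite-dimensional complex Hilbert space with eigendecomposition
`H = ∑_k λ_k |v_k⟩⟨v_k|` (the `v_k` forming an orthonormal eigenbasis), let `ψ` be a
unit vector, `t ≥ 0`, and `μ ≥ 0` with `μt ≤ π`. Then
`|⟨ψ|e^{-iHt}|ψ⟩| ≥ cos(μt) − 2 ∑_{k : |λ_k| > μ} |⟨v_k|ψ⟩|²`, where
`⟨ψ|e^{-iHt}|ψ⟩ = ∑_k e^{-iλ_k t} |⟨v_k|ψ⟩|²`. -/
theorem slow_evolution_bound {E : Type*} [NormedAddCommGroup E] [InnerProductSpace ℂ E]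
    [FiniteDimensional ℂ E] {ι : Type*} [Fintype ι]
    (v : ι → E) (hv : Orthonormal ℂ v)
    (hspan : Submodule.span ℂ (Set.range v) = ⊤)
    (lam : ι → ℝ) (ψ : E) (hψ : ‖ψ‖ = 1)
    (t μ : ℝ) (ht : 0 ≤ t) (hμ : 0 ≤ μ) (hμt : μ * t ≤ Real.pi) :
    Real.cos (μ * t) -
        2 * ∑ k ∈ Finset.univ.filter fun k => μ < |lam k|, ‖(inner ℂ (v k) ψ : ℂ)‖ ^ 2
      ≤ ‖(∑ k, Complex.exp (-Complex.I * (lam k) * t) *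
          ((‖(inner ℂ (v k) ψ : ℂ)‖ : ℂ)) ^ 2)‖ :=
  slow_evolution_bound_general v hv hspan lam ψ hψ t μ ht hμt
end

section
/- There is a universal constant C > 0 such that for all integers k, n ≥ 1 and every k-linear form f : (ℝ^n)^k → ℝ with coefficient tensor f̂, one has (Σ_{i_1,…,i_k=1}^n |f̂_{i_1,…,i_k}|^{2k/(k+1)})^{(k+1)/(2k)} ≤ C · k^{log₂ e} · ‖f‖_∞. -/
/-! The proof halves the degree. Write `k = m + l` with `m = ⌈k/2⌉`, `l = ⌊k/2⌋` and read the
coefficients as a matrix `a j i`, `j ∈ [n]^m`, `i ∈ [n]^l`. Blei's inequality bounds the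
`ℓ^{2k/(k+1)}` norm of `a` by the mixed norms `ℓ^{2m/(m+1)}(ℓ²)` (rows) and `ℓ^{2l/(l+1)}(ℓ²)`
(columns). Fixing signs on the `l`-block turns `f` into an `m`-linear form bounded by `‖f‖_∞`, so
the induction hypothesis bounds its coefficients `j ↦ ∑ᵢ a j i χᵢ` in `ℓ^{2m/(m+1)}`; averaging over
the signs and using the Khintchine inequality for Rademacher chaos of order `l` (whose constant
comes from the fourth moment bound `E|X|⁴ ≤ 3^l (E|X|²)²`) turns this into the row bound, and
symmetrically for the columns. Each halving costs a factor `√3`, so the constant is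
`√3^⌈log₂ k⌉ ≤ √3 · k^{log₂ √3} ≤ √3 · k^{log₂ e}`. -/

noncomputable section

open Finset

universe u

namespace BohnenblustHille

def boolSign (b : Bool) : ℝ := if b then 1 else -1

@[simp] lemma boolSign_not (b : Bool) : boolSign (!b) = -boolSign b := by
  cases b <;> simp [boolSign]

@[simp] lemma boolSign_mul_self (b : Bool) : boolSign b * boolSign b = 1 := by
  cases b <;> simp [boolSign]

@[simp] lemma norm_boolSign (b : Bool) : ‖boolSign b‖ = 1 := by
  cases b <;> simp [boolSign]

section Rademacher

variable {ι : Type*} [Fintype ι] [DecidableEq ι]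

lemma sum_boolSign_mul_eq_zero (p : ι) (G : (ι → Bool) → ℝ)
    (hG : ∀ v b, G (Function.update v p b) = G v) :
    ∑ v : ι → Bool, boolSign (v p) * G v = 0 := by
  have hflip : Function.Involutive fun v : ι → Bool => Function.update v p !(v p) :=
    fun v => by simp
  have h := Fintype.sum_bijective _ hflip.bijective (fun v => boolSign (v p) * G v)
    (fun v => -(boolSign (v p) * G v)) fun v => by simp [hG]
  rw [sum_neg_distrib] at h
  linarith

lemma sum_boolSign_mul_boolSign (p q : ι) :
    ∑ v : ι → Bool, boolSign (v p) * boolSign (v q) =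
      if p = q then 2 ^ Fintype.card ι else 0 := by
  split_ifs with hpq
  · simp [hpq]
  · exact sum_boolSign_mul_eq_zero p _ fun v b => by rw [Function.update_of_ne (Ne.symm hpq)]

variable {E : Type*} [NormedAddCommGroup E] [InnerProductSpace ℝ E]

lemma sum_norm_sq_sum_boolSign_smul (w : ι → E) (S : Finset ι) :
    ∑ v : ι → Bool, ‖∑ p ∈ S, boolSign (v p) • w p‖ ^ 2 =
      2 ^ Fintype.card ι * ∑ p ∈ S, ‖w p‖ ^ 2 := by
  calc ∑ v : ι → Bool, ‖∑ p ∈ S, boolSign (v p) • w p‖ ^ 2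
      = ∑ p ∈ S, ∑ q ∈ S,
          (∑ v : ι → Bool, boolSign (v p) * boolSign (v q)) * inner ℝ (w p) (w q) := by
        simp_rw [← real_inner_self_eq_norm_sq, sum_inner, inner_sum, real_inner_smul_left,
          real_inner_smul_right, sum_mul]
        rw [sum_comm]
        refine sum_congr rfl fun p _ => ?_
        rw [sum_comm]
        refine sum_congr rfl fun q _ => sum_congr rfl fun v _ => by ring
    _ = 2 ^ Fintype.card ι * ∑ p ∈ S, ‖w p‖ ^ 2 := by
        simp [sum_boolSign_mul_boolSign, ite_mul, mul_sum]

lemma norm_boolSign_smul_add_pow_four (b : Bool) (x y : E) :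
    ‖boolSign b • x + y‖ ^ 4 = (‖x‖ ^ 2 + ‖y‖ ^ 2) ^ 2 + 4 * inner ℝ x y ^ 2 +
      boolSign b * (4 * inner ℝ x y * (‖x‖ ^ 2 + ‖y‖ ^ 2)) := by
  rw [show (4 : ℕ) = 2 * 2 from rfl, pow_mul, norm_add_sq_real, norm_smul, norm_boolSign, one_mul,
    real_inner_smul_left]
  linear_combination (4 * inner ℝ x y ^ 2) * boolSign_mul_self b

lemma sum_norm_pow_four_sum_boolSign_smul_le (w : ι → E) (S : Finset ι) :
    ∑ v : ι → Bool, ‖∑ p ∈ S, boolSign (v p) • w p‖ ^ 4 ≤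
      3 * 2 ^ Fintype.card ι * (∑ p ∈ S, ‖w p‖ ^ 2) ^ 2 := by
  induction S using Finset.induction_on with
  | empty => simp
  | insert p₀ S hp₀ ih =>
    set X : (ι → Bool) → E := fun v => ∑ p ∈ S, boolSign (v p) • w p
    set a := ‖w p₀‖ ^ 2
    set A := ∑ p ∈ S, ‖w p‖ ^ 2
    have hX : ∀ v b, X (Function.update v p₀ b) = X v := fun v b =>
      sum_congr rfl fun p hp => by rw [Function.update_of_ne (ne_of_mem_of_not_mem hp hp₀)]
    have hexpand : ∀ v, ‖∑ p ∈ insert p₀ S, boolSign (v p) • w p‖ ^ 4 =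
        (a + ‖X v‖ ^ 2) ^ 2 + 4 * inner ℝ (w p₀) (X v) ^ 2 +
          boolSign (v p₀) * (4 * inner ℝ (w p₀) (X v) * (a + ‖X v‖ ^ 2)) := fun v => by
      rw [sum_insert hp₀, norm_boolSign_smul_add_pow_four]
    have hcross : ∑ v : ι → Bool,
        boolSign (v p₀) * (4 * inner ℝ (w p₀) (X v) * (a + ‖X v‖ ^ 2)) = 0 :=
      sum_boolSign_mul_eq_zero p₀ _ fun v b => by rw [hX]
    have hsecond : ∑ v : ι → Bool, ‖X v‖ ^ 2 = 2 ^ Fintype.card ι * A :=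
      sum_norm_sq_sum_boolSign_smul w S
    have hCS : ∑ v : ι → Bool, inner ℝ (w p₀) (X v) ^ 2 ≤ a * (2 ^ Fintype.card ι * A) := by
      rw [← hsecond, mul_sum]
      refine sum_le_sum fun v _ => ?_
      rw [← mul_pow, sq_le_sq, abs_mul, abs_norm, abs_norm]
      exact abs_real_inner_le_norm _ _
    have hconst : ∑ _v : ι → Bool, a ^ 2 = 2 ^ Fintype.card ι * a ^ 2 := by
      rw [sum_const, card_univ, Fintype.card_fun, Fintype.card_bool, nsmul_eq_mul]
      push_cast
      ring
    rw [sum_congr rfl fun v _ => hexpand v, sum_add_distrib, sum_add_distrib, hcross, add_zero,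
      sum_insert hp₀]
    simp_rw [add_sq]
    rw [sum_add_distrib, sum_add_distrib, hconst, ← mul_sum, hsecond, ← mul_sum]
    have h2 : (0 : ℝ) ≤ 2 ^ Fintype.card ι := by positivity
    have ha : 0 ≤ a := by positivity
    have hA : 0 ≤ A := sum_nonneg fun p _ => by positivity
    have hfourth : ∑ v : ι → Bool, (‖X v‖ ^ 2) ^ 2 ≤ 3 * 2 ^ Fintype.card ι * A ^ 2 := by
      simp_rw [← pow_mul]
      exact ih
    -- the average is at most `a² + 6aA + 3A² ≤ 3(a + A)²`
    nlinarith [mul_nonneg h2 (mul_nonneg ha hA), mul_nonneg h2 (sq_nonneg a)]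

end Rademacher

section Chaos

variable {ι E : Type*} {l : ℕ}

def signMonomial (i : Fin l → ι) (x : Fin l → ι → Bool) : ℝ :=
  ∏ r, boolSign (x r (i r))

lemma signMonomial_cons (p : ι) (i : Fin l → ι) (v : ι → Bool) (x : Fin l → ι → Bool) :
    signMonomial (Fin.cons p i : Fin (l + 1) → ι) (Fin.cons v x) =
      boolSign (v p) * signMonomial i x := by
  simp [signMonomial, Fin.prod_univ_succ]

def multilinearEval [Fintype ι] [AddCommMonoid E] [Module ℝ E] (b : (Fin l → ι) → E)
    (x : Fin l → ι → Bool) : E :=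
  ∑ i, signMonomial i x • b i

def curryHead (b : (Fin (l + 1) → ι) → E) (i : Fin l → ι) : PiLp 2 fun _ : ι => E :=
  WithLp.toLp 2 fun p => b (Fin.cons p i)

lemma sum_fin_succ_pi {τ M : Type*} [Fintype τ] [AddCommMonoid M] (F : (Fin (l + 1) → τ) → M) :
    ∑ i, F i = ∑ p, ∑ i : Fin l → τ, F (Fin.cons p i) := by
  rw [← (Fin.consEquiv fun _ => τ).sum_comp, Fintype.sum_prod_type]
  rfl

lemma multilinearEval_cons [Fintype ι] [AddCommGroup E] [Module ℝ E]
    (b : (Fin (l + 1) → ι) → E) (v : ι → Bool) (x : Fin l → ι → Bool) :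
    multilinearEval b (Fin.cons v x) =
      ∑ p, boolSign (v p) • (multilinearEval (curryHead b) x).ofLp p := by
  simp only [multilinearEval, sum_fin_succ_pi, signMonomial_cons, WithLp.ofLp_sum,
    WithLp.ofLp_smul, curryHead, Finset.sum_apply, Pi.smul_apply, smul_sum, mul_smul]

lemma sum_norm_sq_curryHead [Fintype ι] [SeminormedAddCommGroup E]
    (b : (Fin (l + 1) → ι) → E) :
    ∑ i, ‖curryHead b i‖ ^ 2 = ∑ i, ‖b i‖ ^ 2 := by
  simp only [curryHead, PiLp.norm_sq_eq_of_L2]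
  rw [sum_comm, sum_fin_succ_pi]

end Chaos

section ChaosMoments

/- `ι` and `E` share a universe because the induction on `l` replaces `E` by
`PiLp 2 fun _ : ι => E`: collecting the coefficients of the first block into one `ℓ²`-valued
coefficient reduces the step to Rademacher sums with vector coefficients. -/
variable {ι E : Type u} [Fintype ι] [DecidableEq ι] [NormedAddCommGroup E]
  [InnerProductSpace ℝ E] {l : ℕ}

lemma sum_norm_sq_multilinearEval (b : (Fin l → ι) → E) :
    ∑ x, ‖multilinearEval b x‖ ^ 2 = (2 ^ Fintype.card ι) ^ l * ∑ i, ‖b i‖ ^ 2 := by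
  induction l generalizing E with
  | zero => simp [multilinearEval, signMonomial]
  | succ l ih =>
    calc ∑ x, ‖multilinearEval b x‖ ^ 2
        = ∑ x, ∑ v : ι → Bool,
            ‖∑ p, boolSign (v p) • (multilinearEval (curryHead b) x).ofLp p‖ ^ 2 := by
          rw [sum_fin_succ_pi, sum_comm]
          simp only [multilinearEval_cons]
      _ = ∑ x, 2 ^ Fintype.card ι * ‖multilinearEval (curryHead b) x‖ ^ 2 := by
          simp only [sum_norm_sq_sum_boolSign_smul, PiLp.norm_sq_eq_of_L2]
      _ = (2 ^ Fintype.card ι) ^ (l + 1) * ∑ i, ‖b i‖ ^ 2 := by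
          rw [← mul_sum, ih, sum_norm_sq_curryHead]
          ring

lemma sum_norm_pow_four_multilinearEval_le (b : (Fin l → ι) → E) :
    ∑ x, ‖multilinearEval b x‖ ^ 4 ≤
      3 ^ l * (2 ^ Fintype.card ι) ^ l * (∑ i, ‖b i‖ ^ 2) ^ 2 := by
  induction l generalizing E with
  | zero => simp [multilinearEval, signMonomial, ← pow_mul]
  | succ l ih =>
    calc ∑ x, ‖multilinearEval b x‖ ^ 4
        = ∑ x, ∑ v : ι → Bool,
            ‖∑ p, boolSign (v p) • (multilinearEval (curryHead b) x).ofLp p‖ ^ 4 := by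
          rw [sum_fin_succ_pi, sum_comm]
          simp only [multilinearEval_cons]
      _ ≤ ∑ x, 3 * 2 ^ Fintype.card ι * ‖multilinearEval (curryHead b) x‖ ^ 4 := by
          refine sum_le_sum fun x _ => ?_
          rw [show (4 : ℕ) = 2 * 2 from rfl, pow_mul _ 2 2, PiLp.norm_sq_eq_of_L2]
          exact sum_norm_pow_four_sum_boolSign_smul_le _ _
      _ ≤ 3 ^ (l + 1) * (2 ^ Fintype.card ι) ^ (l + 1) * (∑ i, ‖b i‖ ^ 2) ^ 2 := by
          rw [← mul_sum, ← sum_norm_sq_curryHead, pow_succ, pow_succ]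
          nlinarith [ih (curryHead b), pow_pos (two_pos (α := ℝ)) (Fintype.card ι)]

end ChaosMoments

def bhExponent (k : ℕ) : ℝ := 2 * k / (k + 1)

lemma bhExponent_pos {k : ℕ} (hk : k ≠ 0) : 0 < bhExponent k := by
  unfold bhExponent; positivity

lemma sum_rpow_mul_rpow_le {α : Type*} (s : Finset α) {f g : α → ℝ} (hf : ∀ i ∈ s, 0 ≤ f i)
    (hg : ∀ i ∈ s, 0 ≤ g i) {a b : ℝ} (ha : 0 < a) (hb : 0 < b) (hab : a + b = 1) :
    ∑ i ∈ s, f i ^ a * g i ^ b ≤ (∑ i ∈ s, f i) ^ a * (∑ i ∈ s, g i) ^ b := by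
  have h := Real.inner_le_Lp_mul_Lq_of_nonneg s (Real.holderConjugate_one_div ha hb hab)
    (fun i hi => Real.rpow_nonneg (hf i hi) a) (fun i hi => Real.rpow_nonneg (hg i hi) b)
  have hf' : ∑ i ∈ s, (f i ^ a) ^ (1 / a) = ∑ i ∈ s, f i := sum_congr rfl fun i hi => by
    rw [← Real.rpow_mul (hf i hi), mul_one_div_cancel ha.ne', Real.rpow_one]
  have hg' : ∑ i ∈ s, (g i ^ b) ^ (1 / b) = ∑ i ∈ s, g i := sum_congr rfl fun i hi => by
    rw [← Real.rpow_mul (hg i hi), mul_one_div_cancel hb.ne', Real.rpow_one]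
  rwa [hf', hg', one_div_one_div, one_div_one_div] at h

lemma abs_rpow_eq_rpow_mul_rpow (x : ℝ) {a b c d e : ℝ} (h : a * b + c * d = e) (he : e ≠ 0) :
    |x| ^ e = (|x| ^ a) ^ b * (|x| ^ c) ^ d := by
  rw [← Real.rpow_mul (abs_nonneg x), ← Real.rpow_mul (abs_nonneg x),
    ← Real.rpow_add' (abs_nonneg x) (h ▸ he), h]

lemma sq_eq_abs_rpow_two (x : ℝ) : x ^ 2 = |x| ^ (2 : ℝ) := by
  rw [Real.rpow_two, sq_abs]

lemma sum_sq_pow_le {α : Type*} (s : Finset α) (X : α → ℝ) (m : ℕ) :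
    (∑ i ∈ s, X i ^ 2) ^ (m + 2) ≤
      (∑ i ∈ s, |X i| ^ bhExponent m) ^ (m + 1) * ∑ i ∈ s, X i ^ 4 := by
  have hm : (0 : ℝ) < m + 2 := by positivity
  have hS : 0 ≤ ∑ i ∈ s, |X i| ^ bhExponent m := sum_nonneg fun i _ => by positivity
  have hF : 0 ≤ ∑ i ∈ s, |X i| ^ (4 : ℝ) := sum_nonneg fun i _ => by positivity
  have hexp : bhExponent m * ((m + 1) / (m + 2)) + 4 * (1 / (m + 2)) = 2 := by
    unfold bhExponent
    field_simp
    ring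
  have hHolder : ∑ i ∈ s, X i ^ 2 ≤
      (∑ i ∈ s, |X i| ^ bhExponent m) ^ ((m + 1 : ℝ) / (m + 2)) *
        (∑ i ∈ s, |X i| ^ (4 : ℝ)) ^ (1 / (m + 2 : ℝ)) := by
    refine le_of_eq_of_le (sum_congr rfl fun i _ => ?_)
      (sum_rpow_mul_rpow_le s (fun i _ => by positivity) (fun i _ => by positivity)
        (by positivity) (by positivity) (by field_simp; ring))
    rw [sq_eq_abs_rpow_two]
    exact abs_rpow_eq_rpow_mul_rpow _ hexp two_ne_zero
  have hfour : ∑ i ∈ s, |X i| ^ (4 : ℝ) = ∑ i ∈ s, X i ^ 4 := sum_congr rfl fun i _ => by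
    rw [show (4 : ℝ) = (4 : ℕ) by norm_num, Real.rpow_natCast, pow_abs,
      abs_of_nonneg (by positivity)]
  calc (∑ i ∈ s, X i ^ 2) ^ (m + 2)
      ≤ ((∑ i ∈ s, |X i| ^ bhExponent m) ^ ((m + 1 : ℝ) / (m + 2)) *
        (∑ i ∈ s, |X i| ^ (4 : ℝ)) ^ (1 / (m + 2 : ℝ))) ^ (m + 2) :=
        pow_le_pow_left₀ (sum_nonneg fun i _ => sq_nonneg _) hHolder _
    _ = (∑ i ∈ s, |X i| ^ bhExponent m) ^ (m + 1) * ∑ i ∈ s, X i ^ 4 := by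
        rw [mul_pow, ← Real.rpow_mul_natCast hS, ← Real.rpow_mul_natCast hF, ← hfour]
        push_cast
        rw [div_mul_cancel₀ _ hm.ne', one_div_mul_cancel hm.ne', Real.rpow_one]
        norm_cast

lemma pow_succ_mul_pow_le_of_moments {α : Type*} (s : Finset α) (g : α → ℝ) {m : ℕ} (hm : m ≠ 0)
    {M T K : ℝ} (hM : 0 < M) (hK : 0 ≤ K) (h2 : ∑ i ∈ s, g i ^ 2 = M * T)
    (h4 : ∑ i ∈ s, g i ^ 4 ≤ K * M * T ^ 2) :
    M ^ (m + 1) * T ^ m ≤ K * (∑ i ∈ s, |g i| ^ bhExponent m) ^ (m + 1) := by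
  have hS : 0 ≤ ∑ i ∈ s, |g i| ^ bhExponent m := sum_nonneg fun i _ => by positivity
  have hT : 0 ≤ T := (mul_nonneg_iff_of_pos_left hM).1 (h2 ▸ sum_nonneg fun i _ => sq_nonneg _)
  rcases hT.eq_or_lt with rfl | hT
  · rw [zero_pow hm, mul_zero]
    positivity
  refine le_of_mul_le_mul_right ?_ (by positivity : 0 < M * T ^ 2)
  calc M ^ (m + 1) * T ^ m * (M * T ^ 2) = (∑ i ∈ s, g i ^ 2) ^ (m + 2) := by rw [h2]; ring
    _ ≤ (∑ i ∈ s, |g i| ^ bhExponent m) ^ (m + 1) * ∑ i ∈ s, g i ^ 4 := sum_sq_pow_le s g m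
    _ ≤ (∑ i ∈ s, |g i| ^ bhExponent m) ^ (m + 1) * (K * M * T ^ 2) :=
        mul_le_mul_of_nonneg_left h4 (by positivity)
    _ = K * (∑ i ∈ s, |g i| ^ bhExponent m) ^ (m + 1) * (M * T ^ 2) := by ring

lemma mul_rpow_le_of_moments {α : Type*} (s : Finset α) (g : α → ℝ) {m : ℕ} (hm : m ≠ 0)
    {M T K : ℝ} (hM : 0 < M) (hK : 0 ≤ K) (h2 : ∑ i ∈ s, g i ^ 2 = M * T)
    (h4 : ∑ i ∈ s, g i ^ 4 ≤ K * M * T ^ 2) :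
    M * T ^ ((m : ℝ) / (m + 1)) ≤ K ^ (1 / (m + 1 : ℝ)) * ∑ i ∈ s, |g i| ^ bhExponent m := by
  have hS : 0 ≤ ∑ i ∈ s, |g i| ^ bhExponent m := sum_nonneg fun i _ => by positivity
  have hT : 0 ≤ T := (mul_nonneg_iff_of_pos_left hM).1 (h2 ▸ sum_nonneg fun i _ => sq_nonneg _)
  have h := Real.rpow_le_rpow (by positivity) (pow_succ_mul_pow_le_of_moments s g hm hM hK h2 h4)
    (by positivity : (0 : ℝ) ≤ 1 / (m + 1 : ℝ))
  have hinv : (1 / (m + 1 : ℝ)) = ((m + 1 : ℕ) : ℝ)⁻¹ := by push_cast; ring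
  rwa [Real.mul_rpow (by positivity) (by positivity), Real.mul_rpow hK (by positivity), hinv,
    Real.pow_rpow_inv_natCast hM.le (by omega), Real.pow_rpow_inv_natCast hS (by omega),
    ← Real.rpow_natCast_mul hT, ← hinv, mul_one_div] at h

lemma khintchine_multilinearEval {ι : Type} [Fintype ι] [DecidableEq ι] {l m : ℕ} (hm : m ≠ 0)
    (b : (Fin l → ι) → ℝ) :
    (2 ^ Fintype.card ι) ^ l * (∑ i, b i ^ 2) ^ ((m : ℝ) / (m + 1)) ≤
      3 ^ ((l : ℝ) / (m + 1)) * ∑ x, |multilinearEval b x| ^ bhExponent m := by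
  have h2 := sum_norm_sq_multilinearEval b
  have h4 := sum_norm_pow_four_multilinearEval_le b
  simp only [Real.norm_eq_abs, sq_abs, Even.pow_abs (by decide : Even 4)] at h2 h4
  have h := mul_rpow_le_of_moments univ (multilinearEval b) hm (by positivity)
    (by positivity : (0 : ℝ) ≤ 3 ^ l) h2 (by linarith)
  rwa [← Real.rpow_natCast (3 : ℝ) l, ← Real.rpow_mul (by norm_num), mul_one_div] at h

lemma sum_rpow_sum_sq_le {J ι : Type} [Fintype J] [Fintype ι] [DecidableEq ι] {l m : ℕ}
    (hm : m ≠ 0) (a : J → (Fin l → ι) → ℝ) {D : ℝ}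
    (hD : ∀ x, ∑ j, |multilinearEval (a j) x| ^ bhExponent m ≤ D) :
    ∑ j, (∑ i, a j i ^ 2) ^ ((m : ℝ) / (m + 1)) ≤ 3 ^ ((l : ℝ) / (m + 1)) * D := by
  set M : ℝ := (2 ^ Fintype.card ι) ^ l
  refine le_of_mul_le_mul_left ?_ (by positivity : 0 < M)
  calc M * ∑ j, (∑ i, a j i ^ 2) ^ ((m : ℝ) / (m + 1))
      ≤ ∑ j, 3 ^ ((l : ℝ) / (m + 1)) * ∑ x, |multilinearEval (a j) x| ^ bhExponent m := by
        rw [mul_sum]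
        exact sum_le_sum fun j _ => khintchine_multilinearEval hm (a j)
    _ = 3 ^ ((l : ℝ) / (m + 1)) * ∑ x, ∑ j, |multilinearEval (a j) x| ^ bhExponent m := by
        rw [← mul_sum, sum_comm]
    _ ≤ 3 ^ ((l : ℝ) / (m + 1)) * ∑ _x : Fin l → ι → Bool, D := by gcongr with x; exact hD x
    _ = M * (3 ^ ((l : ℝ) / (m + 1)) * D) := by
        simp [M]
        ring

lemma Lp_sum_le_sum_Lp {I J : Type*} [Fintype J] (T : Finset I) (F : I → J → ℝ)
    (hF : ∀ i j, 0 ≤ F i j) {r : ℝ} (hr : 1 ≤ r) :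
    (∑ j, (∑ i ∈ T, F i j) ^ r) ^ (1 / r) ≤ ∑ i ∈ T, (∑ j, F i j ^ r) ^ (1 / r) := by
  classical
  induction T using Finset.induction_on with
  | empty =>
    simp [Real.zero_rpow (by positivity : r ≠ 0), Real.zero_rpow (by positivity : r⁻¹ ≠ 0)]
  | insert i₀ T hi₀ ih =>
    simp_rw [sum_insert hi₀]
    exact (Real.Lp_add_le_of_nonneg univ hr (fun j _ => hF i₀ j)
      fun j _ => sum_nonneg fun i _ => hF i j).trans (add_le_add le_rfl ih)

lemma sum_rpow_sum_abs_rpow_le {J I : Type*} [Fintype J] [Fintype I] (a : J → I → ℝ) {l : ℕ}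
    (hl : l ≠ 0) :
    (∑ j, (∑ i, |a j i| ^ bhExponent l) ^ ((l + 1 : ℝ) / l)) ^ ((l : ℝ) / (l + 1)) ≤
      ∑ i, (∑ j, a j i ^ 2) ^ ((l : ℝ) / (l + 1)) := by
  have hl' : (0 : ℝ) < l := by positivity
  have h := Lp_sum_le_sum_Lp univ (fun i j => |a j i| ^ bhExponent l)
    (fun i j => by positivity) (by rw [le_div_iff₀ hl']; linarith : (1 : ℝ) ≤ (l + 1) / l)
  simp_rw [one_div_div, ← Real.rpow_mul (abs_nonneg _)] at h
  convert h using 4 with i _ j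
  rw [sq_eq_abs_rpow_two]
  unfold bhExponent
  field_simp

lemma blei {J I : Type*} [Fintype J] [Fintype I] (a : J → I → ℝ) {m l : ℕ} (hm : m ≠ 0)
    (hl : l ≠ 0) :
    ∑ j, ∑ i, |a j i| ^ bhExponent (m + l) ≤
      (∑ j, (∑ i, a j i ^ 2) ^ ((m : ℝ) / (m + 1))) ^ ((m + 1 : ℝ) / (m + l + 1)) *
        (∑ i, (∑ j, a j i ^ 2) ^ ((l : ℝ) / (l + 1))) ^ ((l + 1 : ℝ) / (m + l + 1)) := by
  set R : J → ℝ := fun j => ∑ i, a j i ^ 2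
  set Z : J → ℝ := fun j => ∑ i, |a j i| ^ bhExponent l
  have hR : ∀ j, 0 ≤ R j := fun j => sum_nonneg fun i _ => sq_nonneg _
  have hZ : ∀ j, 0 ≤ Z j := fun j => sum_nonneg fun i _ => by positivity
  have hrow : ∀ j, ∑ i, |a j i| ^ bhExponent (m + l) ≤
      R j ^ ((m : ℝ) / (m + l + 1)) * Z j ^ ((l + 1 : ℝ) / (m + l + 1)) := fun j => by
    refine le_of_eq_of_le (sum_congr rfl fun i _ => ?_)
      (sum_rpow_mul_rpow_le univ (fun i _ => sq_nonneg _) (fun i _ => by positivity)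
        (by positivity) (by positivity) (by field_simp; ring))
    rw [sq_eq_abs_rpow_two]
    refine abs_rpow_eq_rpow_mul_rpow _ ?_ (bhExponent_pos (by omega)).ne'
    unfold bhExponent
    push_cast
    field_simp
  have hZcols : 0 ≤ ∑ j, Z j ^ ((l + 1 : ℝ) / l) := sum_nonneg fun j _ => by positivity
  calc ∑ j, ∑ i, |a j i| ^ bhExponent (m + l)
      ≤ ∑ j, R j ^ ((m : ℝ) / (m + l + 1)) * Z j ^ ((l + 1 : ℝ) / (m + l + 1)) :=
        sum_le_sum fun j _ => hrow j
    _ = ∑ j, (R j ^ ((m : ℝ) / (m + 1))) ^ ((m + 1 : ℝ) / (m + l + 1)) *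
          (Z j ^ ((l + 1 : ℝ) / l)) ^ ((l : ℝ) / (m + l + 1)) := by
        refine sum_congr rfl fun j _ => ?_
        rw [← Real.rpow_mul (hR j), ← Real.rpow_mul (hZ j)]
        field_simp
    _ ≤ (∑ j, R j ^ ((m : ℝ) / (m + 1))) ^ ((m + 1 : ℝ) / (m + l + 1)) *
          (∑ j, Z j ^ ((l + 1 : ℝ) / l)) ^ ((l : ℝ) / (m + l + 1)) :=
        sum_rpow_mul_rpow_le univ (fun j _ => by positivity) (fun j _ => by positivity)
          (by positivity) (by positivity) (by field_simp; ring)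
    _ = (∑ j, R j ^ ((m : ℝ) / (m + 1))) ^ ((m + 1 : ℝ) / (m + l + 1)) *
          ((∑ j, Z j ^ ((l + 1 : ℝ) / l)) ^ ((l : ℝ) / (l + 1))) ^ ((l + 1 : ℝ) / (m + l + 1)) := by
        rw [← Real.rpow_mul hZcols]
        field_simp
    _ ≤ _ := by
        gcongr
        exact sum_rpow_sum_abs_rpow_le a hl

section Splitting

variable {ι : Type*} {m l : ℕ}

lemma signMonomial_append (j : Fin m → ι) (i : Fin l → ι) (y : Fin m → ι → Bool)
    (x : Fin l → ι → Bool) :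
    signMonomial (Fin.append j i) (Fin.append y x) = signMonomial j y * signMonomial i x := by
  simp [signMonomial, Fin.prod_univ_add]

lemma sum_fin_append_pi {τ M : Type*} [Fintype τ] [AddCommMonoid M] (F : (Fin (m + l) → τ) → M) :
    ∑ i, F i = ∑ j : Fin m → τ, ∑ i : Fin l → τ, F (Fin.append j i) := by
  rw [← (Fin.appendEquiv m l).sum_comp, Fintype.sum_prod_type]
  rfl

variable [Fintype ι]

lemma multilinearEval_append_left (c : (Fin (m + l) → ι) → ℝ) (y : Fin m → ι → Bool)
    (x : Fin l → ι → Bool) :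
    multilinearEval c (Fin.append y x) =
      multilinearEval (fun j => multilinearEval (fun i => c (Fin.append j i)) x) y := by
  simp only [multilinearEval, sum_fin_append_pi, signMonomial_append, smul_eq_mul, mul_sum,
    mul_assoc]

lemma multilinearEval_append_right (c : (Fin (m + l) → ι) → ℝ) (y : Fin m → ι → Bool)
    (x : Fin l → ι → Bool) :
    multilinearEval c (Fin.append y x) =
      multilinearEval (fun i => multilinearEval (fun j => c (Fin.append j i)) y) x := by
  rw [multilinearEval_append_left]
  simp only [multilinearEval, smul_eq_mul, mul_sum]
  rw [sum_comm]
  exact sum_congr rfl fun i _ => sum_congr rfl fun j _ => by ring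

end Splitting

lemma blei_factors_le {m l : ℕ} (hm : m ≠ 0) (hl : l ≠ 0) {X Y u : ℝ} (hX0 : 0 ≤ X) (hY0 : 0 ≤ Y)
    (hu : 0 ≤ u) (hX : X ≤ 3 ^ ((l : ℝ) / (m + 1)) * u ^ bhExponent m)
    (hY : Y ≤ 3 ^ ((m : ℝ) / (l + 1)) * u ^ bhExponent l) :
    X ^ ((m + 1 : ℝ) / (m + l + 1)) * Y ^ ((l + 1 : ℝ) / (m + l + 1)) ≤
      (√3 * u) ^ bhExponent (m + l) := by
  calc X ^ ((m + 1 : ℝ) / (m + l + 1)) * Y ^ ((l + 1 : ℝ) / (m + l + 1))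
      ≤ (3 ^ ((l : ℝ) / (m + 1)) * u ^ bhExponent m) ^ ((m + 1 : ℝ) / (m + l + 1)) *
          (3 ^ ((m : ℝ) / (l + 1)) * u ^ bhExponent l) ^ ((l + 1 : ℝ) / (m + l + 1)) := by
        gcongr
    _ = (√3 * u) ^ bhExponent (m + l) := by
        have h3 : (0 : ℝ) ≤ 3 := by norm_num
        rw [Real.mul_rpow (by positivity) (Real.rpow_nonneg hu _),
          Real.mul_rpow (by positivity) (Real.rpow_nonneg hu _), Real.mul_rpow (by positivity) hu,
          Real.sqrt_eq_rpow, ← Real.rpow_mul h3, ← Real.rpow_mul h3, ← Real.rpow_mul h3,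
          ← Real.rpow_mul hu, ← Real.rpow_mul hu, mul_mul_mul_comm, ← Real.rpow_add (by norm_num),
          ← Real.rpow_add' hu (by unfold bhExponent; positivity)]
        unfold bhExponent
        push_cast
        congr 2
        · field_simp
          ring
        · field_simp

lemma exists_sign_multilinearEval_eq_sum_abs {ι : Type*} [Fintype ι] (c : (Fin 1 → ι) → ℝ) :
    ∃ x, multilinearEval c x = ∑ i, |c i| := by
  refine ⟨fun _ p => decide (0 ≤ c fun _ => p), sum_congr rfl fun i _ => ?_⟩
  have hi : (fun _ : Fin 1 => i 0) = i := funext fun r => by rw [Subsingleton.elim r 0]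
  by_cases h : 0 ≤ c i <;>
    simp [signMonomial, boolSign, hi, h, abs_of_nonneg, abs_of_neg, not_le.mp]

lemma sum_abs_rpow_bhExponent_le {ι : Type} [Fintype ι] [DecidableEq ι] {k : ℕ} (hk : k ≠ 0)
    (c : (Fin k → ι) → ℝ) {B : ℝ} (hB : ∀ x, |multilinearEval c x| ≤ B) :
    ∑ i, |c i| ^ bhExponent k ≤ (√3 ^ Nat.clog 2 k * B) ^ bhExponent k := by
  induction k using Nat.strong_induction_on generalizing B with
  | _ k ih =>
  have hB0 : 0 ≤ B := (abs_nonneg _).trans (hB fun _ _ => true)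
  rcases (show k = 1 ∨ 2 ≤ k by omega) with rfl | hk2
  · obtain ⟨x, hx⟩ := exists_sign_multilinearEval_eq_sum_abs c
    have h1 : bhExponent 1 = 1 := by norm_num [bhExponent]
    simpa [h1, ← hx] using (le_abs_self _).trans (hB x)
  obtain ⟨m, l, rfl, hm, hl, hlm, hclog⟩ : ∃ m l, k = m + l ∧ m ≠ 0 ∧ l ≠ 0 ∧ l ≤ m ∧
      Nat.clog 2 k = Nat.clog 2 m + 1 :=
    ⟨(k + 1) / 2, k / 2, by omega, by omega, by omega, by omega, by
      rw [Nat.clog_of_two_le one_lt_two hk2, show k + 2 - 1 = k + 1 by omega]⟩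
  set a : (Fin m → ι) → (Fin l → ι) → ℝ := fun j i => c (Fin.append j i)
  set u := √3 ^ Nat.clog 2 m * B
  have hX := sum_rpow_sum_sq_le hm a (D := u ^ bhExponent m) fun x =>
    ih m (by omega) hm _ fun y => by rw [← multilinearEval_append_left]; exact hB _
  have hY := sum_rpow_sum_sq_le hl (fun i j => a j i)
    (D := (√3 ^ Nat.clog 2 l * B) ^ bhExponent l) fun y =>
      ih l (by omega) hl _ fun x => by rw [← multilinearEval_append_right]; exact hB _
  have hlu : (√3 ^ Nat.clog 2 l * B) ^ bhExponent l ≤ u ^ bhExponent l := by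
    have : √3 ^ Nat.clog 2 l ≤ √3 ^ Nat.clog 2 m :=
      pow_le_pow_right₀ (Real.one_le_sqrt.mpr (by norm_num)) (Nat.clog_mono_right 2 hlm)
    exact Real.rpow_le_rpow (by positivity) (mul_le_mul_of_nonneg_right this hB0)
      (bhExponent_pos hl).le
  have hD : √3 ^ Nat.clog 2 (m + l) * B = √3 * u := by
    rw [hclog, pow_succ]
    ring
  rw [hD, sum_fin_append_pi]
  exact (blei a hm hl).trans (blei_factors_le hm hl (by positivity) (by positivity)
    (by positivity) hX (hY.trans (by gcongr)))

lemma sqrt_three_le_exp_one : √3 ≤ Real.exp 1 :=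
  (Real.sqrt_le_left (Real.exp_pos 1).le).mpr (by nlinarith [Real.add_one_le_exp 1])

lemma sqrt_three_pow_clog_le {k : ℕ} (hk : k ≠ 0) :
    √3 ^ Nat.clog 2 k ≤ √3 * (k : ℝ) ^ Real.logb 2 (Real.exp 1) := by
  rcases (show k = 1 ∨ 1 < k by omega) with rfl | hk1
  · simp [Real.one_le_sqrt]
  obtain ⟨j, hj⟩ : ∃ j, Nat.clog 2 k = j + 1 :=
    ⟨_, (Nat.succ_pred_eq_of_pos (Nat.clog_pos one_lt_two hk1)).symm⟩
  have h2j : (2 : ℝ) ^ j ≤ k := by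
    exact_mod_cast (hj ▸ Nat.pow_pred_clog_lt_self one_lt_two hk1).le
  calc √3 ^ Nat.clog 2 k = √3 * ((2 : ℝ) ^ j) ^ Real.logb 2 √3 := by
        rw [hj, pow_succ', ← Real.rpow_pow_comm zero_le_two,
          Real.rpow_logb two_pos (by norm_num) (by positivity)]
    _ ≤ √3 * (k : ℝ) ^ Real.logb 2 √3 := by
        gcongr
        exact Real.logb_nonneg one_lt_two (Real.one_le_sqrt.mpr (by norm_num))
    _ ≤ √3 * (k : ℝ) ^ Real.logb 2 (Real.exp 1) := by
        gcongr
        · exact_mod_cast hk1.le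
        · exact one_lt_two
        · exact sqrt_three_le_exp_one

end BohnenblustHille

/-- The Bohnenblust–Hille inequality with polynomial constant (Defant–Popa–Schwarting,
Pellegrino–Seoane-Sepúlveda): there is a universal constant `C > 0` such that for all
`k, n ≥ 1` and every `k`-linear form `f(x¹,…,xᵏ) = ∑ f̂_{i_1,…,i_k} x¹_{i_1} ⋯ xᵏ_{i_k}`
with coefficients `c = f̂`, writing `B` for any bound on `|f|` over `{±1}ⁿ` inputs
(in particular `B = ‖f‖_∞`),
`(∑ |f̂_{i_1,…,i_k}|^{2k/(k+1)})^{(k+1)/(2k)} ≤ C k^{log₂ e} B`. -/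
theorem bohnenblust_hille_polynomial_constant :
    ∃ C : ℝ, 0 < C ∧ ∀ k n : ℕ, 1 ≤ k → 1 ≤ n →
      ∀ c : (Fin k → Fin n) → ℝ, ∀ B : ℝ,
      (∀ x : Fin k → Fin n → Bool,
        |∑ i : Fin k → Fin n, c i * ∏ j, (if x j (i j) then (1 : ℝ) else -1)| ≤ B) →
      (∑ i : Fin k → Fin n, |c i| ^ (2 * (k : ℝ) / ((k : ℝ) + 1))) ^ (((k : ℝ) + 1) / (2 * (k : ℝ)))
        ≤ C * (k : ℝ) ^ (Real.logb 2 (Real.exp 1)) * B := by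
  open BohnenblustHille in
  refine ⟨√3, by positivity, fun k n hk _ c B hB => ?_⟩
  have hB' : ∀ x, |multilinearEval c x| ≤ B := fun x => by
    simpa [multilinearEval, signMonomial, boolSign, mul_comm] using hB x
  have hB0 : 0 ≤ B := (abs_nonneg _).trans (hB' fun _ _ => true)
  have hs : 0 < bhExponent k := bhExponent_pos (by omega)
  calc (∑ i, |c i| ^ (2 * (k : ℝ) / ((k : ℝ) + 1))) ^ (((k : ℝ) + 1) / (2 * (k : ℝ)))
      = (∑ i, |c i| ^ bhExponent k) ^ (bhExponent k)⁻¹ := by rw [bhExponent, inv_div]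
    _ ≤ ((√3 ^ Nat.clog 2 k * B) ^ bhExponent k) ^ (bhExponent k)⁻¹ := by
        gcongr
        exact sum_abs_rpow_bhExponent_le (by omega) c hB'
    _ = √3 ^ Nat.clog 2 k * B := Real.rpow_rpow_inv (by positivity) hs.ne'
    _ ≤ √3 * (k : ℝ) ^ Real.logb 2 (Real.exp 1) * B := by
        gcongr
        exact sqrt_three_pow_clog_le (by omega)
end
end

section
/- Let A = (A_{ij}) be a real matrix with finitely many rows and columns, and let m ≥ 1 be a real number. Then (Σ_{i,j} |A_{ij}|^{2m/(m+1)})^{(m+1)/(2m)} ≤ (Σ_i (Σ_j A_{ij}²)^{m/(m+2)})^{(m+2)/(4m)} · (Σ_j (Σ_i A_{ij}²)^{m/(m+2)})^{(m+2)/(4m)}. -/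
/-!
Write `s = 2m/(m+2)`, so that the exponent on the left is `p = 4s/(s+2)` and `1/p` is the mean
of `1/s` and `1/2`. In each row, log-convexity of `q ↦ ∑_j |A_ij|^q` interpolates the `ℓ_p` sum
between the `ℓ_2` and `ℓ_s` sums; Hölder's inequality over the rows then bounds everything by
the `ℓ_s(ℓ_2)` norm of the rows times the `ℓ_2(ℓ_s)` norm of the rows, and since `s ≤ 2`,
Minkowski's inequality bounds the latter by the `ℓ_s(ℓ_2)` norm of the columns.
-/

open Finset Real

section
variable {ι κ : Type*}

theorem sum_rpow_mul_rpow_one_sub_le (s : Finset ι) {f g : ι → ℝ} (hf : ∀ i ∈ s, 0 ≤ f i)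
    (hg : ∀ i ∈ s, 0 ≤ g i) {θ : ℝ} (hθ₀ : 0 < θ) (hθ₁ : θ < 1) :
    ∑ i ∈ s, f i ^ θ * g i ^ (1 - θ) ≤ (∑ i ∈ s, f i) ^ θ * (∑ i ∈ s, g i) ^ (1 - θ) := by
  have hθ' : 1 - θ ≠ 0 := by linarith
  have holder := inner_le_Lp_mul_Lq_of_nonneg s (.inv_one_sub_inv hθ₀ hθ₁)
    (fun i hi => rpow_nonneg (hf i hi) θ) (fun i hi => rpow_nonneg (hg i hi) (1 - θ))
  have hf' : ∑ i ∈ s, (f i ^ θ) ^ θ⁻¹ = ∑ i ∈ s, f i :=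
    sum_congr rfl fun i hi => by rw [← rpow_mul (hf i hi), mul_inv_cancel₀ hθ₀.ne', rpow_one]
  have hg' : ∑ i ∈ s, (g i ^ (1 - θ)) ^ (1 - θ)⁻¹ = ∑ i ∈ s, g i :=
    sum_congr rfl fun i hi => by rw [← rpow_mul (hg i hi), mul_inv_cancel₀ hθ', rpow_one]
  simpa only [hf', hg', one_div, inv_inv] using holder

theorem sum_rpow_convex_comb_le (s : Finset ι) {x : ι → ℝ} (hx : ∀ i ∈ s, 0 ≤ x i)
    {a b θ : ℝ} (ha : 0 ≤ a) (hb : 0 ≤ b) (hθ₀ : 0 < θ) (hθ₁ : θ < 1) :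
    ∑ i ∈ s, x i ^ (θ * a + (1 - θ) * b) ≤
      (∑ i ∈ s, x i ^ a) ^ θ * (∑ i ∈ s, x i ^ b) ^ (1 - θ) := by
  calc ∑ i ∈ s, x i ^ (θ * a + (1 - θ) * b)
      = ∑ i ∈ s, (x i ^ a) ^ θ * (x i ^ b) ^ (1 - θ) := sum_congr rfl fun i hi => by
        rw [rpow_add_of_nonneg (hx i hi) (by positivity) (mul_nonneg (by linarith) hb),
          ← rpow_mul (hx i hi), ← rpow_mul (hx i hi), mul_comm a, mul_comm b]
    _ ≤ _ := sum_rpow_mul_rpow_one_sub_le s (fun i hi => rpow_nonneg (hx i hi) a)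
        (fun i hi => rpow_nonneg (hx i hi) b) hθ₀ hθ₁

theorem Lp_sum_le_sum_Lp_of_nonneg [Fintype ι] (s : Finset κ) {t : ι → κ → ℝ}
    (ht : ∀ i, ∀ j ∈ s, 0 ≤ t i j) {p : ℝ} (hp : 1 ≤ p) :
    (∑ i, (∑ j ∈ s, t i j) ^ p) ^ (1 / p) ≤ ∑ j ∈ s, (∑ i, t i j ^ p) ^ (1 / p) := by
  have hp₀ : p ≠ 0 := by positivity
  induction s using Finset.cons_induction with
  | empty => simp [zero_rpow hp₀, zero_rpow (inv_ne_zero hp₀)]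
  | cons a s ha ih =>
    simp only [forall_mem_cons] at ht
    simp only [sum_cons]
    calc (∑ i, (t i a + ∑ j ∈ s, t i j) ^ p) ^ (1 / p)
        ≤ (∑ i, t i a ^ p) ^ (1 / p) + (∑ i, (∑ j ∈ s, t i j) ^ p) ^ (1 / p) :=
          Lp_add_le_of_nonneg univ hp (fun i _ => (ht i).1)
            (fun i _ => sum_nonneg (ht i).2)
      _ ≤ (∑ i, t i a ^ p) ^ (1 / p) + ∑ j ∈ s, (∑ i, t i j ^ p) ^ (1 / p) := by
        gcongr
        exact ih fun i => (ht i).2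

theorem sum_sum_rpow_le_mixed_norms [Fintype ι] [Fintype κ] {t : ι → κ → ℝ}
    (ht : ∀ i j, 0 ≤ t i j) {s : ℝ} (hs₀ : 0 < s) (hs₂ : s ≤ 2) :
    ∑ i, ∑ j, t i j ^ (4 * s / (s + 2)) ≤
      (∑ i, (∑ j, t i j ^ 2) ^ (s / 2)) ^ (2 / (s + 2)) *
        (∑ j, (∑ i, t i j ^ 2) ^ (s / 2)) ^ (2 / (s + 2)) := by
  set θ := s / (s + 2) with hθ
  have hθ₀ : 0 < θ := by positivity
  have hθ₁ : θ < 1 := by rw [hθ, div_lt_one (by positivity)]; linarith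
  have hθ' : 1 - θ = 2 / (s + 2) := by rw [hθ]; field_simp; ring
  set S : ι → ℝ := fun i => ∑ j, t i j ^ s
  have hS : ∀ i, 0 ≤ S i := fun i => sum_nonneg fun j _ => rpow_nonneg (ht i j) s
  have hrow : ∀ i, 0 ≤ ∑ j, t i j ^ 2 := fun i => sum_nonneg fun j _ => sq_nonneg _
  set C := ∑ j, (∑ i, t i j ^ 2) ^ (s / 2)
  have lyapunov : ∀ i, ∑ j, t i j ^ (4 * s / (s + 2)) ≤ (∑ j, t i j ^ 2) ^ θ * S i ^ (1 - θ) := by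
    intro i
    have h := sum_rpow_convex_comb_le univ (fun j _ => ht i j) zero_le_two hs₀.le hθ₀ hθ₁
    rwa [show θ * 2 + (1 - θ) * s = 4 * s / (s + 2) by rw [hθ', hθ]; field_simp; ring,
      sum_congr rfl fun j _ => rpow_two (t i j)] at h
  have regroup : ∀ i, (∑ j, t i j ^ 2) ^ θ * S i ^ (1 - θ) =
      (S i ^ (2 / s)) ^ θ * ((∑ j, t i j ^ 2) ^ (s / 2)) ^ (1 - θ) := by
    intro i
    -- `θ = s/(s+2)` is the weight for which `(2/s)θ = 1 - θ`.
    rw [← rpow_mul (hS i), ← rpow_mul (hrow i), mul_comm, hθ', hθ]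
    congr 2 <;> field_simp
  have minkowski : ∑ i, S i ^ (2 / s) ≤ C ^ (2 / s) := by
    have h := Lp_sum_le_sum_Lp_of_nonneg univ (fun i j _ => rpow_nonneg (ht i j) s)
      (p := 2 / s) (by rw [le_div_iff₀ hs₀]; linarith)
    have hcol : ∀ j, ∑ i, (t i j ^ s) ^ (2 / s) = ∑ i, t i j ^ 2 := fun j =>
      sum_congr rfl fun i _ => by
        rw [← rpow_mul (ht i j), mul_div_cancel₀ 2 hs₀.ne', rpow_two]
    simp only [hcol, one_div_div] at h
    exact (rpow_inv_le_iff_of_pos (sum_nonneg fun i _ => rpow_nonneg (hS i) _)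
      (sum_nonneg fun j _ => by positivity) (by positivity)).1 (by rwa [inv_div])
  calc ∑ i, ∑ j, t i j ^ (4 * s / (s + 2))
      ≤ ∑ i, (S i ^ (2 / s)) ^ θ * ((∑ j, t i j ^ 2) ^ (s / 2)) ^ (1 - θ) :=
        sum_le_sum fun i _ => (lyapunov i).trans_eq (regroup i)
    _ ≤ (∑ i, S i ^ (2 / s)) ^ θ * (∑ i, (∑ j, t i j ^ 2) ^ (s / 2)) ^ (1 - θ) :=
        sum_rpow_mul_rpow_one_sub_le univ (fun i _ => rpow_nonneg (hS i) _)
          (fun i _ => rpow_nonneg (hrow i) _) hθ₀ hθ₁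
    _ ≤ (C ^ (2 / s)) ^ θ * (∑ i, (∑ j, t i j ^ 2) ^ (s / 2)) ^ (1 - θ) := by
        gcongr
        exact sum_nonneg fun i _ => rpow_nonneg (hS i) _
    _ = _ := by
        rw [← rpow_mul (by positivity), mul_comm, hθ']
        congr 2
        rw [hθ]; field_simp
end

/-- The Blei / Defant–Popa–Schwarting mixed-norm inequality: for a real matrix
`A = (A_{ij})` with finitely many rows and columns and any real `m ≥ 1`,
`(∑_{i,j} |A_{ij}|^{2m/(m+1)})^{(m+1)/(2m)}
  ≤ (∑_i ‖row_i‖₂^{2m/(m+2)})^{(m+2)/(4m)} (∑_j ‖col_j‖₂^{2m/(m+2)})^{(m+2)/(4m)}`,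
where `‖row_i‖₂² = ∑_j A_{ij}²` and `‖col_j‖₂² = ∑_i A_{ij}²`. -/
theorem blei_mixed_norm_inequality {ι κ : Type*} [Fintype ι] [Fintype κ]
    (A : ι → κ → ℝ) (m : ℝ) (hm : 1 ≤ m) :
    (∑ i, ∑ j, |A i j| ^ (2 * m / (m + 1))) ^ ((m + 1) / (2 * m))
      ≤ (∑ i, (Real.sqrt (∑ j, (A i j) ^ 2)) ^ (2 * m / (m + 2))) ^ ((m + 2) / (4 * m)) *
        (∑ j, (Real.sqrt (∑ i, (A i j) ^ 2)) ^ (2 * m / (m + 2))) ^ ((m + 2) / (4 * m)) := by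
  have hm₀ : 0 < m := by linarith
  set s := 2 * m / (m + 2) with hs
  have hs₀ : 0 < s := by positivity
  have hs₂ : s ≤ 2 := by rw [hs, div_le_iff₀ (by positivity)]; linarith
  have key := sum_sum_rpow_le_mixed_norms (fun i j => abs_nonneg (A i j)) hs₀ hs₂
  simp only [sq_abs] at key
  rw [show 4 * s / (s + 2) = 2 * m / (m + 1) by rw [hs]; field_simp; ring,
    sum_congr rfl fun i _ => rpow_div_two_eq_sqrt s (sum_nonneg fun j _ => sq_nonneg (A i j)),
    sum_congr rfl fun j _ => rpow_div_two_eq_sqrt s (sum_nonneg fun i _ => sq_nonneg (A i j)),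
    ← mul_rpow (by positivity) (by positivity)] at key
  calc (∑ i, ∑ j, |A i j| ^ (2 * m / (m + 1))) ^ ((m + 1) / (2 * m))
      ≤ (((∑ i, √(∑ j, A i j ^ 2) ^ s) * ∑ j, √(∑ i, A i j ^ 2) ^ s) ^ (2 / (s + 2)))
          ^ ((m + 1) / (2 * m)) := by gcongr
    _ = _ := by
      rw [← rpow_mul (by positivity), mul_rpow (by positivity) (by positivity)]
      congr 2 <;> rw [hs] <;> field_simp <;> ring
end
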